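/- Let S ⊆ ℕ₀ be nonempty. (1) For every k ∈ ℕ, the S-gap shifts X(k + S) and X(S) are flow equivalent, where k + S = {k + s : s ∈ S}. (2) For all a, b ∈ ℕ₀ \ S, the S-gap shifts X({a} ∪ S) and X({b} ∪ S) are flow equivalent. -/

import Mathlib

open Filter

namespace SymbDyn

/-- A point of a (full) shift: a bi-infinite sequence of symbols, where symbols
are drawn from the universal symbol set `ℕ`. -/
abbrev Point : Type := ℤ → ℕ

/-- The shift map `σ`, with `σ(x) i = x (i + 1)`. -/
def shift (x : Point) : Point := fun i => x (i + 1)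

/-- The word `w` occurs in `x` starting at position `i`. -/
def MatchesAt (w : List ℕ) (x : Point) (i : ℤ) : Prop :=
  ∀ j : Fin w.length, x (i + ((j : ℕ) : ℤ)) = w.get j

/-- The word `w` occurs (as a factor) somewhere in the point `x`. -/
def occursIn (w : List ℕ) (x : Point) : Prop := ∃ i : ℤ, MatchesAt w x i

/-- All points over the alphabet `A` in which no word of `F` occurs. -/
def XF (A : Set ℕ) (F : Set (List ℕ)) : Set Point :=
  { x | (∀ i, x i ∈ A) ∧ ∀ w ∈ F, ¬ occursIn w x }

/-- A shift space: a set of the form `X_F` over some finite alphabet. -/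
def IsShiftSpace (X : Set Point) : Prop :=
  ∃ A : Set ℕ, A.Finite ∧ ∃ F : Set (List ℕ), X = XF A F

/-- A shift of finite type: `X_F` for a finite set `F` of forbidden words. -/
def IsSFT (X : Set Point) : Prop :=
  ∃ A : Set ℕ, A.Finite ∧ ∃ F : Set (List ℕ), F.Finite ∧ X = XF A F

/-- The language `B(X)` of a shift space `X`. -/
def language (X : Set Point) : Set (List ℕ) := { w | ∃ x ∈ X, occursIn w x }

/-- The words of length `n` in the language of `X`, i.e. `B_n(X)`. -/
def Bn (X : Set Point) (n : ℕ) : Set (List ℕ) := { w ∈ language X | w.length = n }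

/-- The set of symbols actually occurring in points of `X`. -/
def alphabet (X : Set Point) : Set ℕ := { a | ∃ x ∈ X, ∃ i : ℤ, x i = a }

/-- `φ` is a sliding block code from `X` to `Y`: it maps `X` into `Y` and there are
`m, n` and a block map `Φ` with `φ(x) i = Φ (x (i - m) … x (i + n))` on `X`. -/
def IsSlidingBlockCode (X Y : Set Point) (φ : Point → Point) : Prop :=
  Set.MapsTo φ X Y ∧
    ∃ (m n : ℕ) (Φ : List ℕ → ℕ), ∀ x ∈ X, ∀ i : ℤ,
      φ x i = Φ (List.ofFn fun j : Fin (m + n + 1) => x (i - (m : ℤ) + ((j : ℕ) : ℤ)))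

/-- `X` and `Y` are conjugate: there is a bijective sliding block code from `X` onto `Y`. -/
def Conjugate (X Y : Set Point) : Prop :=
  ∃ φ : Point → Point, IsSlidingBlockCode X Y φ ∧ Set.BijOn φ X Y

/-- A sofic shift: the image of a shift of finite type under a surjective sliding
block code. -/
def IsSofic (X : Set Point) : Prop :=
  ∃ Z : Set Point, IsSFT Z ∧ ∃ φ : Point → Point,
    IsSlidingBlockCode Z X φ ∧ Set.SurjOn φ Z X

/-- `y` is obtained from `x` by replacing every occurrence of the word `u` by the
word `v` (up to an overall shift).  Here `s k` enumerates, in order, the starting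
positions of the blocks of `x` (each block being either an occurrence of `u`, all
occurrences of `u` being blocks, or a single letter), and `t k` is the starting
position in `y` of the block corresponding to block `k` of `x`. -/
def ReplacedBy (u v : List ℕ) (x y : Point) : Prop :=
  u ≠ [] ∧
    ∃ s t : ℤ → ℤ,
      (∀ i : ℤ, MatchesAt u x i → ∃ k, s k = i) ∧
      (∀ m : ℤ, ∃ k, t k ≤ m ∧ m < t (k + 1)) ∧
      ∀ k : ℤ,
        (MatchesAt u x (s k) →
          s (k + 1) = s k + (u.length : ℤ) ∧ t (k + 1) = t k + (v.length : ℤ) ∧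
            ∀ j : Fin v.length, y (t k + ((j : ℕ) : ℤ)) = v.get j) ∧
        (¬ MatchesAt u x (s k) →
          s (k + 1) = s k + 1 ∧ t (k + 1) = t k + 1 ∧ y (t k) = x (s k))

/-- `X^{u ↦ v}`: the set obtained from `X` by replacing every occurrence of the
word `u` by the word `v` in every point, closed under the shift map. -/
def ReplaceWord (u v : List ℕ) (X : Set Point) : Set Point :=
  { y | ∃ x ∈ X, ReplacedBy u v x y }

/-- `Y` is a symbol expansion `X^{a ↦ a◊}` of `X`, for a letter `a` of `X` and a
symbol `◊` not in the alphabet of `X`. -/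
def IsSymbolExpansionOf (Y X : Set Point) : Prop :=
  ∃ a dia : ℕ, a ∈ alphabet X ∧ dia ∉ alphabet X ∧ Y = ReplaceWord [a] [a, dia] X

/-- One step of the Parry–Sullivan chain: both sets are shift spaces, and they are
conjugate or one is a symbol expansion of the other. -/
def FEStep (X Y : Set Point) : Prop :=
  IsShiftSpace X ∧ IsShiftSpace Y ∧
    (Conjugate X Y ∨ Conjugate Y X ∨ IsSymbolExpansionOf Y X ∨ IsSymbolExpansionOf X Y)

/-- Flow equivalence (Parry–Sullivan): a finite chain of conjugacies and symbol
expansions/contractions. -/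
def FlowEquiv (X Y : Set Point) : Prop := Relation.ReflTransGen FEStep X Y

/-- The entropy `h(X) = lim_{n→∞} (1/n) log₂ |B_n(X)|` of a shift space
(stated via `limsup`; for shift spaces the limit exists). -/
noncomputable def entropy (X : Set Point) : ℝ :=
  Filter.limsup (fun n : ℕ => Real.logb 2 ((Bn X n).ncard : ℝ) / (n : ℝ)) Filter.atTop

/-- `h([X])`: the set of entropies of shift spaces flow equivalent to `X`. -/
def entropySet (X : Set Point) : Set ℝ :=
  { r | ∃ Y : Set Point, IsShiftSpace Y ∧ FlowEquiv Y X ∧ entropy Y = r }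

/-- A set of reals is dense in `ℝ⁺`. -/
def DenseInPos (s : Set ℝ) : Prop :=
  ∀ r : ℝ, 0 < r → ∀ ε : ℝ, 0 < ε → ∃ e ∈ s, |e - r| < ε

/-- `X` is irreducible: any two words of the language can be joined inside it. -/
def IrreducibleShift (X : Set Point) : Prop :=
  ∀ u ∈ language X, ∀ v ∈ language X, ∃ w : List ℕ, u ++ w ++ v ∈ language X

/-- `w` is intrinsically synchronising for `X`. -/
def IntrinsicallySynchronising (X : Set Point) (w : List ℕ) : Prop :=
  ∀ v u : List ℕ, v ++ w ∈ language X → w ++ u ∈ language X →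
    v ++ w ++ u ∈ language X

/-- `X` admits non-trivial `w`-overlaps: there is a word `v` in the language of `X`
with `|w| < |v| < 2|w|` having `w` both as a prefix and as a suffix. -/
def AdmitsNontrivialOverlaps (X : Set Point) (w : List ℕ) : Prop :=
  ∃ v ∈ language X, w.length < v.length ∧ v.length < 2 * w.length ∧ w <+: v ∧ w <:+ v

/-- The full shift over the alphabet `A`. -/
def fullShift (A : Set ℕ) : Set Point := { x | ∀ i, x i ∈ A }

/-- The word `1 0^k 1`. -/
def gapWord (k : ℕ) : List ℕ := 1 :: (List.replicate k 0 ++ [1])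

open Classical in
/-- The forbidden words of the `S`-gap shift. -/
noncomputable def sGapForbidden (S : Set ℕ) : Set (List ℕ) :=
  if S.Finite then
    { w | ∃ k : ℕ, k ∉ S ∧ k < sSup S ∧ w = gapWord k } ∪ {List.replicate (1 + sSup S) 0}
  else
    { w | ∃ k : ℕ, k ∉ S ∧ w = gapWord k }

/-- The `S`-gap shift `X(S)` over the alphabet `{0, 1}`. -/
noncomputable def sGapShift (S : Set ℕ) : Set Point :=
  XF {0, 1} (sGapForbidden S)

/-! ### Basic lemmas about `MatchesAt` -/

lemma matchesAt_iff {w : List ℕ} {x : Point} {i : ℤ} :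
    MatchesAt w x i ↔ ∀ (j : ℕ) (h : j < w.length), x (i + j) = w[j] := by
  constructor
  · intro H j h; exact H ⟨j, h⟩
  · intro H j; exact H j j.2

lemma matchesAt_nil {x : Point} {i : ℤ} : MatchesAt [] x i := by
  intro j; exact absurd j.2 (by simp)

lemma matchesAt_cons {a : ℕ} {w : List ℕ} {x : Point} {i : ℤ} :
    MatchesAt (a :: w) x i ↔ x i = a ∧ MatchesAt w x (i + 1) := by
  rw [matchesAt_iff, matchesAt_iff]
  constructor
  · intro H
    refine ⟨by simpa using H 0 (Nat.succ_pos _), ?_⟩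
    intro j h
    have h2 := H (j + 1) (by simpa using Nat.succ_lt_succ h)
    have e : i + ((j + 1 : ℕ) : ℤ) = i + 1 + (j : ℤ) := by push_cast; ring
    rw [e] at h2
    simpa using h2
  · rintro ⟨h0, H⟩ j h
    cases j with
    | zero => simpa using h0
    | succ n =>
      have h2 := H n (by simpa using Nat.lt_of_succ_lt_succ h)
      have e : i + ((n + 1 : ℕ) : ℤ) = i + 1 + (n : ℤ) := by push_cast; ring
      rw [e]
      simpa using h2

lemma matchesAt_singleton {a : ℕ} {x : Point} {i : ℤ} :
    MatchesAt [a] x i ↔ x i = a := by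
  rw [matchesAt_cons]
  simp [matchesAt_nil]

lemma matchesAt_append {u v : List ℕ} {x : Point} {i : ℤ} :
    MatchesAt (u ++ v) x i ↔ MatchesAt u x i ∧ MatchesAt v x (i + u.length) := by
  induction u generalizing i with
  | nil => simp [matchesAt_nil]
  | cons a u ih =>
    rw [List.cons_append, matchesAt_cons, matchesAt_cons, ih]
    constructor
    · rintro ⟨h1, h2, h3⟩
      refine ⟨⟨h1, h2⟩, ?_⟩
      have e : i + 1 + (u.length : ℤ) = i + ((a :: u).length : ℤ) := by
        simp; ring
      rwa [e] at h3
    · rintro ⟨⟨h1, h2⟩, h3⟩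
      refine ⟨h1, h2, ?_⟩
      have e : i + 1 + (u.length : ℤ) = i + ((a :: u).length : ℤ) := by
        simp; ring
      rwa [← e] at h3

/-- A run of `n` zeros starting at position `i`. -/
def Run0 (x : Point) (i : ℤ) (n : ℕ) : Prop := ∀ j : ℕ, j < n → x (i + j) = 0

lemma matchesAt_replicate0 {n : ℕ} {x : Point} {i : ℤ} :
    MatchesAt (List.replicate n 0) x i ↔ Run0 x i n := by
  induction n generalizing i with
  | zero => simp [matchesAt_nil, Run0]
  | succ m ih =>
    rw [List.replicate_succ, matchesAt_cons, ih]
    constructor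
    · rintro ⟨h0, H⟩ j hj
      cases j with
      | zero => simpa using h0
      | succ n =>
        have := H n (Nat.lt_of_succ_lt_succ hj)
        have e : i + 1 + (n : ℤ) = i + ((n : ℕ) + 1 : ℕ) := by push_cast; ring
        rw [e] at this
        exact this
    · intro H
      refine ⟨by simpa using H 0 (Nat.succ_pos m), ?_⟩
      intro j hj
      have := H (j + 1) (Nat.succ_lt_succ hj)
      have e : i + ((j : ℕ) + 1 : ℕ) = i + 1 + (j : ℤ) := by push_cast; ring
      rw [e] at this
      exact this

/-- The word `p 0^k e`. -/
def gw (p k e : ℕ) : List ℕ := p :: (List.replicate k 0 ++ [e])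

lemma gapWord_eq (k : ℕ) : gapWord k = gw 1 k 1 := rfl

lemma matchesAt_gw {p k e : ℕ} {x : Point} {i : ℤ} :
    MatchesAt (gw p k e) x i ↔
      x i = p ∧ (∀ j : ℕ, j < k → x (i + 1 + j) = 0) ∧ x (i + 1 + k) = e := by
  rw [gw, matchesAt_cons, matchesAt_append, matchesAt_replicate0, matchesAt_singleton]
  have e1 : i + 1 + ((List.replicate k 0).length : ℤ) = i + 1 + k := by simp
  rw [e1]
  tauto

lemma matchesAt_cons_rep {p k : ℕ} {x : Point} {i : ℤ} :
    MatchesAt (p :: List.replicate k 0) x i ↔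
      x i = p ∧ ∀ j : ℕ, j < k → x (i + 1 + j) = 0 := by
  rw [matchesAt_cons, matchesAt_replicate0]; rfl
/-! ### Symbol expansion machinery -/

/-- Replace each occurrence of the letter `a` by the two letters `a d`. -/
def expandWord (a d : ℕ) (w : List ℕ) : List ℕ :=
  w.flatMap (fun l => if l = a then [a, d] else [l])

@[simp] lemma expandWord_nil (a d : ℕ) : expandWord a d [] = [] := rfl

lemma expandWord_cons (a d l : ℕ) (w : List ℕ) :
    expandWord a d (l :: w) =
      (if l = a then [a, d] else [l]) ++ expandWord a d w := by
  simp [expandWord, List.flatMap_cons]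

lemma expandWord_append (a d : ℕ) (u v : List ℕ) :
    expandWord a d (u ++ v) = expandWord a d u ++ expandWord a d v := by
  simp [expandWord, List.flatMap_append]

lemma expandWord_replicate (a d b : ℕ) (hb : b ≠ a) (n : ℕ) :
    expandWord a d (List.replicate n b) = List.replicate n b := by
  induction n with
  | zero => rfl
  | succ m ih => rw [List.replicate_succ, expandWord_cons, if_neg hb, ih]; rfl

lemma expandWord_singleton_self (a d : ℕ) : expandWord a d [a] = [a, d] := by
  rw [show ([a] : List ℕ) = a :: [] from rfl, expandWord_cons, if_pos rfl]; rfl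

lemma expandWord_singleton (a d l : ℕ) (hl : l ≠ a) : expandWord a d [l] = [l] := by
  rw [show ([l] : List ℕ) = l :: [] from rfl, expandWord_cons, if_neg hl]; rfl

/-- Recursively defined bi-infinite sequences. -/
lemma exists_zrec (inv : ℤ → Prop) (next prev : ℤ → ℤ) (m0 : ℤ) (h0 : inv m0)
    (hn : ∀ m, inv m → inv (next m)) (hp : ∀ m, inv m → inv (prev m))
    (hnp : ∀ m, inv m → next (prev m) = m) :
    ∃ t : ℤ → ℤ, t 0 = m0 ∧ ∀ k : ℤ, inv (t k) ∧ t (k + 1) = next (t k) := by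
  have hninv : ∀ n : ℕ, inv (next^[n] m0) := by
    intro n
    induction n with
    | zero => exact h0
    | succ m ih => rw [Function.iterate_succ_apply']; exact hn _ ih
  have hpinv : ∀ n : ℕ, inv (prev^[n] m0) := by
    intro n
    induction n with
    | zero => exact h0
    | succ m ih => rw [Function.iterate_succ_apply']; exact hp _ ih
  refine ⟨fun k => if 0 ≤ k then next^[k.toNat] m0 else prev^[(-k).toNat] m0, by simp, ?_⟩
  intro k
  dsimp only
  by_cases hk : 0 ≤ k
  · rw [if_pos hk, if_pos (by omega)]
    refine ⟨hninv _, ?_⟩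
    rw [show (k + 1).toNat = k.toNat + 1 by omega, Function.iterate_succ_apply']
  · rw [if_neg hk]
    refine ⟨hpinv _, ?_⟩
    by_cases hk1 : 0 ≤ k + 1
    · have hk0 : k = -1 := by omega
      subst hk0
      rw [if_pos (by norm_num)]
      simpa using (hnp _ h0).symm
    · rw [if_neg hk1]
      have h2 : (-k).toNat = (-(k+1)).toNat + 1 := by omega
      rw [h2, Function.iterate_succ_apply']
      exact (hnp _ (hpinv _)).symm

/-- A strictly increasing `t` with bounded steps covers `ℤ` by blocks. -/
lemma cover_of_steps (t : ℤ → ℤ) (hstep : ∀ k : ℤ, t k + 1 ≤ t (k + 1)) :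
    ∀ m : ℤ, ∃ k : ℤ, t k ≤ m ∧ m < t (k + 1) := by
  have mono : ∀ k k' : ℤ, k ≤ k' → t k + (k' - k) ≤ t k' := by
    intro k k' h
    refine Int.le_induction (motive := fun n _ => t k + (n - k) ≤ t n) (by simp) ?_ k' h
    intro n hn ih
    have := hstep n
    omega
  intro m
  have hne : ∃ k : ℤ, t k ≤ m := by
    refine ⟨min 0 (m - t 0), ?_⟩
    have h1 : min 0 (m - t 0) ≤ 0 := min_le_left _ _
    have := mono (min 0 (m - t 0)) 0 h1
    have h2 : min 0 (m - t 0) ≤ m - t 0 := min_le_right _ _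
    omega
  have hbdd : ∃ b : ℤ, ∀ z : ℤ, (t z ≤ m) → z ≤ b := by
    refine ⟨max 0 (m - t 0), ?_⟩
    intro z hz
    rcases le_or_gt z 0 with h | h
    · exact le_trans h (le_max_left _ _)
    · have := mono 0 z (le_of_lt h)
      have : z ≤ m - t 0 := by omega
      exact le_trans this (le_max_right _ _)
  obtain ⟨lub, hlub1, hlub2⟩ := Int.exists_greatest_of_bdd hbdd hne
  refine ⟨lub, hlub1, ?_⟩
  by_contra h
  push_neg at h
  have := hlub2 (lub + 1) h
  omega
/-- The block structure of a symbol expansion `a ↦ a d`. -/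
def BlockCond (x y : Point) (a d : ℕ) (s t : ℤ → ℤ) : Prop :=
  ∀ k : ℤ,
    (x (s k) = a →
      s (k + 1) = s k + 1 ∧ t (k + 1) = t k + 2 ∧ y (t k) = a ∧ y (t k + 1) = d) ∧
    (x (s k) ≠ a →
      s (k + 1) = s k + 1 ∧ t (k + 1) = t k + 1 ∧ y (t k) = x (s k))

lemma BlockCond.pos_cases {x y : Point} {a d : ℕ} {s t : ℤ → ℤ}
    (hb : BlockCond x y a d s t)
    (hcover : ∀ m : ℤ, ∃ k : ℤ, t k ≤ m ∧ m < t (k + 1)) (m : ℤ) :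
    (∃ k, t k = m) ∨ (∃ k, x (s k) = a ∧ t k + 1 = m) := by
  obtain ⟨k, h1, h2⟩ := hcover m
  by_cases hx : x (s k) = a
  · have h3 := (hb k).1 hx
    rcases (by omega : t k = m ∨ t k + 1 = m) with h | h
    · exact Or.inl ⟨k, h⟩
    · exact Or.inr ⟨k, hx, h⟩
  · have h3 := (hb k).2 hx
    exact Or.inl ⟨k, by omega⟩

lemma BlockCond.transfer {x y : Point} {a d : ℕ} {s t : ℤ → ℤ}
    (hb : BlockCond x y a d s t) :
    ∀ (w : List ℕ) (k : ℤ),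
      MatchesAt w x (s k) ↔ MatchesAt (expandWord a d w) y (t k) := by
  intro w
  induction w with
  | nil => intro k; simp [matchesAt_nil]
  | cons l w ih =>
    intro k
    rw [expandWord_cons, matchesAt_cons]
    by_cases hl : l = a
    · subst hl
      rw [if_pos rfl]
      constructor
      · rintro ⟨h1, h2⟩
        have h3 := (hb k).1 h1
        rw [matchesAt_append]
        have h4 : MatchesAt w x (s (k + 1)) := by rw [h3.1]; exact h2
        rw [ih (k + 1)] at h4
        refine ⟨by rw [matchesAt_cons, matchesAt_singleton]
                   exact ⟨h3.2.2.1, h3.2.2.2⟩, ?_⟩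
        have e : t k + (([l, d] : List ℕ).length : ℤ) = t (k + 1) := by
          simp; omega
        rw [e]; exact h4
      · intro h
        rw [matchesAt_append, matchesAt_cons, matchesAt_singleton] at h
        obtain ⟨⟨hy1, hy2⟩, h4⟩ := h
        have h1 : x (s k) = l := by
          by_contra hxx
          have := ((hb k).2 hxx).2.2
          rw [this] at hy1
          exact hxx hy1
        have h3 := (hb k).1 h1
        refine ⟨h1, ?_⟩
        rw [← h3.1]
        rw [ih (k + 1)]
        have e : t (k + 1) = t k + (([l, d] : List ℕ).length : ℤ) := by
          simp; omega
        rw [e]; exact h4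
    · rw [if_neg hl]
      constructor
      · rintro ⟨h1, h2⟩
        have hxa : x (s k) ≠ a := by rw [h1]; exact hl
        have h3 := (hb k).2 hxa
        rw [List.singleton_append, matchesAt_cons]
        refine ⟨by rw [h3.2.2]; exact h1, ?_⟩
        have h4 : MatchesAt w x (s (k + 1)) := by rw [h3.1]; exact h2
        rw [ih (k + 1)] at h4
        rwa [h3.2.1] at h4
      · intro h
        rw [List.singleton_append, matchesAt_cons] at h
        obtain ⟨hy1, h4⟩ := h
        have hxa : x (s k) ≠ a := by
          intro hxx
          have := ((hb k).1 hxx).2.2.1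
          rw [this] at hy1
          exact hl hy1.symm
        have h3 := (hb k).2 hxa
        refine ⟨by rw [← h3.2.2]; exact hy1, ?_⟩
        rw [← h3.1, ih (k + 1), h3.2.1]
        exact h4

/-- The forbidden words for the symbol expansion `X^{a ↦ ad}` of `X_F`. -/
def expandF (A : Set ℕ) (F : Set (List ℕ)) (a d : ℕ) : Set (List ℕ) :=
  {w | ∃ b ∈ A, w = [a, b]} ∪ {w | ∃ b ∈ insert d A, b ≠ a ∧ w = [b, d]} ∪
    (expandWord a d '' F)

/-- Main structure theorem: the symbol expansion of an `X_F` shift is again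
an explicitly given `X_F` shift. -/
theorem replaceWord_eq (A : Set ℕ) (F : Set (List ℕ)) (a d : ℕ)
    (ha : a ∈ A) (hd : d ∉ A) (hF : ∀ w ∈ F, ∀ l ∈ w, l ∈ A) :
    ReplaceWord [a] [a, d] (XF A F) = XF (insert d A) (expandF A F a d) := by
  have had : a ≠ d := fun h => hd (h ▸ ha)
  ext y
  constructor
  · rintro ⟨x, hx, hrep⟩
    obtain ⟨-, s, t, -, hcover, hcond⟩ := hrep
    have hb : BlockCond x y a d s t := by
      intro k
      constructor
      · intro hxa
        have h1 := (hcond k).1 (matchesAt_singleton.mpr hxa)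
        refine ⟨by simpa using h1.1, by simpa using h1.2.1, ?_, ?_⟩
        · have := h1.2.2 ⟨0, by norm_num⟩
          simpa using this
        · have := h1.2.2 ⟨1, by norm_num⟩
          simpa using this
      · intro hxa
        have h1 := (hcond k).2 (fun hm => hxa (matchesAt_singleton.mp hm))
        exact ⟨by simpa using h1.1, by simpa using h1.2.1, h1.2.2⟩
    have hxA : ∀ i, x i ∈ A := hx.1
    constructor
    · -- symbols of y
      intro m
      rcases hb.pos_cases hcover m with ⟨k, hk⟩ | ⟨k, hk1, hk2⟩
      · subst hk
        by_cases hxa : x (s k) = a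
        · rw [((hb k).1 hxa).2.2.1]; exact Set.mem_insert_of_mem _ ha
        · rw [((hb k).2 hxa).2.2]; exact Set.mem_insert_of_mem _ (hxA _)
      · rw [← hk2, ((hb k).1 hk1).2.2.2]; exact Set.mem_insert _ _
    · -- no forbidden word occurs in y
      rintro w (hw | hw) ⟨m, hm⟩
      · rcases hw with ⟨b, hbA, rfl⟩ | ⟨b, hbA, hba, rfl⟩
        · -- w = [a, b] with b ∈ A
          rw [matchesAt_cons, matchesAt_singleton] at hm
          obtain ⟨h1, h2⟩ := hm
          rcases hb.pos_cases hcover m with ⟨k, hk⟩ | ⟨k, hk1, hk2⟩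
          · subst hk
            by_cases hxa : x (s k) = a
            · have := ((hb k).1 hxa).2.2.2
              rw [this] at h2
              exact hd (h2 ▸ hbA)
            · have := ((hb k).2 hxa).2.2
              rw [this] at h1
              exact hxa h1
          · rw [← hk2, ((hb k).1 hk1).2.2.2] at h1
            exact had h1.symm
        · -- w = [b, d] with b ≠ a
          rw [matchesAt_cons, matchesAt_singleton] at hm
          obtain ⟨h1, h2⟩ := hm
          rcases hb.pos_cases hcover (m + 1) with ⟨k, hk⟩ | ⟨k, hk1, hk2⟩
          · by_cases hxa : x (s k) = a
            · have := ((hb k).1 hxa).2.2.1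
              rw [← hk, this] at h2
              exact had h2
            · have := ((hb k).2 hxa).2.2
              rw [← hk, this] at h2
              exact (hd (h2 ▸ hxA (s k))).elim
          · have hmtk : m = t k := by omega
            rw [hmtk, ((hb k).1 hk1).2.2.1] at h1
            exact hba h1.symm
      · -- w is the expansion of a forbidden word
        obtain ⟨w0, hw0, rfl⟩ := hw
        rcases w0 with _ | ⟨l, w1⟩
        · exact hx.2 [] hw0 ⟨0, matchesAt_nil⟩
        · have hldA : l ∈ A := hF _ hw0 l (by simp)
          have hyml : y m = (if l = a then a else l) := by
            rw [expandWord_cons] at hm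
            by_cases hl : l = a
            · rw [if_pos hl] at hm ⊢
              rw [matchesAt_append, matchesAt_cons] at hm
              exact hm.1.1
            · rw [if_neg hl] at hm ⊢
              rw [matchesAt_append, matchesAt_cons] at hm
              exact hm.1.1
          have hymd : y m ≠ d := by
            rw [hyml]
            split
            · exact had
            · exact fun h => hd (h ▸ hldA)
          rcases hb.pos_cases hcover m with ⟨k, hk⟩ | ⟨k, hk1, hk2⟩
          · subst hk
            have := (hb.transfer (l :: w1) k).mpr hm
            exact hx.2 _ hw0 ⟨s k, this⟩
          · rw [← hk2, ((hb k).1 hk1).2.2.2] at hymd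
            exact hymd rfl
  · -- reverse inclusion: construct the preimage point
    intro hy
    obtain ⟨hyA, hyF⟩ := hy
    -- block starts are the non-`d` positions
    have hno_dd : ∀ m : ℤ, y m = d → y (m + 1) ≠ d := by
      intro m h1 h2
      refine hyF [d, d] (Or.inl (Or.inr ⟨d, Set.mem_insert _ _, had.symm, rfl⟩)) ⟨m, ?_⟩
      rw [matchesAt_cons, matchesAt_singleton]
      exact ⟨h1, h2⟩
    have hpre_d : ∀ m : ℤ, y (m + 1) = d → y m = a := by
      intro m h1
      by_contra h2
      refine hyF [y m, d]
        (Or.inl (Or.inr ⟨y m, hyA m, h2, rfl⟩)) ⟨m, ?_⟩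
      rw [matchesAt_cons, matchesAt_singleton]
      exact ⟨rfl, h1⟩
    have hm0 : ∃ m0 : ℤ, y m0 ≠ d := by
      by_contra h
      push_neg at h
      exact hno_dd 0 (h 0) (h 1)
    obtain ⟨m0, hm0⟩ := hm0
    obtain ⟨t, ht0, ht⟩ := exists_zrec (fun m => y m ≠ d)
      (fun m => if y (m + 1) = d then m + 2 else m + 1)
      (fun m => if y (m - 1) = d then m - 2 else m - 1) m0 hm0
      (by
        intro m hm
        split
        · rename_i h
          intro h2
          exact hno_dd (m + 1) h (by rwa [show m + 1 + 1 = m + 2 by ring])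
        · assumption)
      (by
        intro m hm
        split
        · rename_i h
          intro h2
          have := hpre_d (m - 2) (by rwa [show m - 2 + 1 = m - 1 by ring])
          rw [h2] at this
          exact had this.symm
        · rename_i h
          exact h)
      (by
        intro m hm
        split
        · rename_i h
          rw [if_pos (by rwa [show m - 2 + 1 = m - 1 by ring])]
          ring
        · rename_i h
          rw [if_neg (by rwa [show m - 1 + 1 = m by ring])]
          ring)
    set x : Point := fun i => y (t i) with hxdef
    have hb : BlockCond x y a d id t := by
      intro k
      constructor
      · intro hxa
        have h1 : y (t k) = a := hxa
        have h2 : y (t k + 1) = d := by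
          by_contra h2
          refine hyF [a, y (t k + 1)] (Or.inl (Or.inl ⟨y (t k + 1), ?_, rfl⟩)) ⟨t k, ?_⟩
          · rcases hyA (t k + 1) with h | h
            · exact absurd h h2
            · exact h
          · rw [matchesAt_cons, matchesAt_singleton]
            exact ⟨h1, rfl⟩
        refine ⟨by simp, ?_, h1, h2⟩
        rw [(ht k).2, if_pos h2]
      · intro hxa
        have h1 : y (t k) = x k := rfl
        have h2 : y (t k + 1) ≠ d := by
          intro h2
          have := hpre_d (t k) h2
          exact hxa this
        refine ⟨by simp, ?_, rfl⟩
        rw [(ht k).2, if_neg h2]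
    have hcover : ∀ m : ℤ, ∃ k : ℤ, t k ≤ m ∧ m < t (k + 1) := by
      apply cover_of_steps
      intro k
      rw [(ht k).2]
      split <;> omega
    have hxmem : x ∈ XF A F := by
      constructor
      · intro i
        have h1 : y (t i) ≠ d := (ht i).1
        rcases hyA (t i) with h | h
        · exact absurd h h1
        · exact h
      · intro w hw ⟨i, hi⟩
        have := (hb.transfer w i).mp (by simpa using hi)
        exact hyF (expandWord a d w) (Or.inr ⟨w, hw, rfl⟩) ⟨t i, this⟩
    refine ⟨x, hxmem, ?_⟩
    refine ⟨by simp, id, t, fun i _ => ⟨i, rfl⟩, hcover, ?_⟩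
    intro k
    constructor
    · intro hma
      have hxa : x (id k) = a := matchesAt_singleton.mp hma
      have h3 := (hb k).1 hxa
      refine ⟨by simpa using h3.1, by simpa using h3.2.1, ?_⟩
      intro j
      match j with
      | ⟨0, _⟩ => simpa using h3.2.2.1
      | ⟨1, _⟩ => simpa using h3.2.2.2
    · intro hma
      have hxa : x (id k) ≠ a := fun h => hma (matchesAt_singleton.mpr h)
      have h3 := (hb k).2 hxa
      exact ⟨by simpa using h3.1, by simpa using h3.2.1, h3.2.2⟩
/-! ### One-block conjugacies -/

lemma conjugate_oneBlock (X Y : Set Point) (π : ℕ → ℕ)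
    (hmap : ∀ x ∈ X, (fun i => π (x i)) ∈ Y)
    (hinj : ∀ x ∈ X, ∀ x' ∈ X, (fun i : ℤ => π (x i)) = (fun i => π (x' i)) → x = x')
    (hsurj : ∀ z ∈ Y, ∃ x ∈ X, (fun i : ℤ => π (x i)) = z) :
    Conjugate X Y := by
  refine ⟨fun x i => π (x i), ⟨fun x hx => hmap x hx, 0, 0, fun l => π l.headI, ?_⟩, ?_⟩
  · intro x hx i
    show π (x i) = π (List.ofFn _).headI
    rw [List.ofFn_succ, List.ofFn_zero]
    simp
  · exact ⟨fun x hx => hmap x hx, fun x hx x' hx' h => hinj x hx x' hx' h,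
      fun z hz => hsurj z hz⟩

lemma festep_symm {X Y : Set Point} (h : FEStep X Y) : FEStep Y X := by
  obtain ⟨h1, h2, h3⟩ := h
  exact ⟨h2, h1, by tauto⟩

lemma flowEquiv_symm {X Y : Set Point} (h : FlowEquiv X Y) : FlowEquiv Y X := by
  induction h with
  | refl => exact Relation.ReflTransGen.refl
  | tail _ h2 ih => exact Relation.ReflTransGen.head (festep_symm h2) ih

lemma flowEquiv_trans {X Y Z : Set Point} (h1 : FlowEquiv X Y) (h2 : FlowEquiv Y Z) :
    FlowEquiv X Z := Relation.ReflTransGen.trans h1 h2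

lemma flowEquiv_single {X Y : Set Point} (h : FEStep X Y) : FlowEquiv X Y :=
  Relation.ReflTransGen.single h

/-! ### Gap shift membership -/

/-- A gap of length `k` between two ones. -/
def GapAt (z : Point) (i : ℤ) (k : ℕ) : Prop :=
  z i = 1 ∧ (∀ j : ℕ, j < k → z (i + 1 + j) = 0) ∧ z (i + 1 + k) = 1

lemma occursIn_gapWord {k : ℕ} {z : Point} :
    occursIn (gapWord k) z ↔ ∃ i, GapAt z i k := by
  unfold occursIn GapAt
  constructor
  · rintro ⟨i, hi⟩
    rw [gapWord_eq, matchesAt_gw] at hi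
    exact ⟨i, hi⟩
  · rintro ⟨i, hi⟩
    exact ⟨i, by rw [gapWord_eq, matchesAt_gw]; exact hi⟩

lemma sGapShift_mem {S : Set ℕ} (hS : S.Nonempty) {z : Point} :
    z ∈ sGapShift S ↔
      (∀ i, z i = 0 ∨ z i = 1) ∧ (∀ i k, GapAt z i k → k ∈ S) ∧
        (S.Finite → ∀ i n, Run0 z i n → n ≤ sSup S) := by
  have halpha : ∀ i : ℤ, z i ∈ ({0, 1} : Set ℕ) ↔ (z i = 0 ∨ z i = 1) := by
    intro i; simp [Set.mem_insert_iff]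
  constructor
  · rintro ⟨hA, hforb⟩
    refine ⟨fun i => (halpha i).mp (hA i), ?_, ?_⟩
    · intro i k hgap
      by_contra hk
      by_cases hfin : S.Finite
      · rcases lt_trichotomy k (sSup S) with h | h | h
        · refine hforb (gapWord k) ?_ (occursIn_gapWord.mpr ⟨i, hgap⟩)
          rw [sGapForbidden, if_pos hfin]
          exact Or.inl ⟨k, hk, h, rfl⟩
        · exact hk (h ▸ Nat.sSup_mem hS hfin.bddAbove)
        · refine hforb (List.replicate (1 + sSup S) 0) ?_ ?_
          · rw [sGapForbidden, if_pos hfin]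
            exact Or.inr rfl
          · refine ⟨i + 1, matchesAt_replicate0.mpr ?_⟩
            intro j hj
            exact hgap.2.1 j (by omega)
      · refine hforb (gapWord k) ?_ (occursIn_gapWord.mpr ⟨i, hgap⟩)
        rw [sGapForbidden, if_neg hfin]
        exact ⟨k, hk, rfl⟩
    · intro hfin i n hrun
      by_contra hn
      refine hforb (List.replicate (1 + sSup S) 0) ?_ ?_
      · rw [sGapForbidden, if_pos hfin]
        exact Or.inr rfl
      · refine ⟨i, matchesAt_replicate0.mpr fun j hj => hrun j (by omega)⟩
  · rintro ⟨h1, h2, h3⟩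
    refine ⟨fun i => (halpha i).mpr (h1 i), ?_⟩
    intro w hw hocc
    by_cases hfin : S.Finite
    · rw [sGapForbidden, if_pos hfin] at hw
      rcases hw with ⟨k, hk, -, rfl⟩ | hw
      · obtain ⟨i, hi⟩ := occursIn_gapWord.mp hocc
        exact hk (h2 i k hi)
      · rw [Set.mem_singleton_iff] at hw
        subst hw
        obtain ⟨i, hi⟩ := hocc
        have := h3 hfin i (1 + sSup S) (matchesAt_replicate0.mp hi)
        omega
    · rw [sGapForbidden, if_neg hfin] at hw
      obtain ⟨k, hk, rfl⟩ := hw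
      obtain ⟨i, hi⟩ := occursIn_gapWord.mp hocc
      exact hk (h2 i k hi)

/-- In a window of `D` consecutive positions there is a multiple of `D`. -/
lemma dvd_window (D : ℤ) (hD : 0 < D) (i : ℤ) :
    ∃ j : ℕ, (j : ℤ) < D ∧ D ∣ (i + j) := by
  refine ⟨((-i) % D).toNat, ?_, ?_⟩
  · have h1 : (-i) % D < D := Int.emod_lt_of_pos _ hD
    have h2 : 0 ≤ (-i) % D := Int.emod_nonneg _ (by omega)
    omega
  · have h2 : 0 ≤ (-i) % D := Int.emod_nonneg _ (by omega)
    have h3 : ((((-i) % D).toNat : ℤ)) = (-i) % D := by omega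
    rw [h3]
    have h5 : i + (-i) % D = D * (-(-i / D)) := by
      rw [Int.emod_def]; ring
    exact ⟨-(-i / D), h5⟩
/-! ### Shifting all gaps by one -/

def oneAdd (S : Set ℕ) : Set ℕ := {n | ∃ s ∈ S, n = 1 + s}

lemma oneAdd_eq_image (S : Set ℕ) : oneAdd S = (fun s => 1 + s) '' S := by
  ext n
  constructor
  · rintro ⟨s, hs, rfl⟩; exact ⟨s, hs, rfl⟩
  · rintro ⟨s, hs, rfl⟩; exact ⟨s, hs, rfl⟩

lemma oneAdd_nonempty {S : Set ℕ} (hS : S.Nonempty) : (oneAdd S).Nonempty := by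
  obtain ⟨s, hs⟩ := hS
  exact ⟨1 + s, s, hs, rfl⟩

lemma zero_not_mem_oneAdd (S : Set ℕ) : 0 ∉ oneAdd S := by
  rintro ⟨s, hs, h⟩
  omega

lemma succ_mem_oneAdd {S : Set ℕ} (k : ℕ) : k + 1 ∈ oneAdd S ↔ k ∈ S := by
  constructor
  · rintro ⟨s, hs, h⟩
    have : s = k := by omega
    exact this ▸ hs
  · intro h
    exact ⟨k, h, by omega⟩

lemma oneAdd_finite_iff (S : Set ℕ) : (oneAdd S).Finite ↔ S.Finite := by
  rw [oneAdd_eq_image]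
  constructor
  · intro h
    exact Set.Finite.of_finite_image h (Set.injOn_of_injective (fun x y h => by omega))
  · exact fun h => h.image _

lemma sSup_oneAdd {S : Set ℕ} (hS : S.Nonempty) (hfin : S.Finite) :
    sSup (oneAdd S) = 1 + sSup S := by
  apply le_antisymm
  · apply csSup_le (oneAdd_nonempty hS)
    rintro n ⟨s, hs, rfl⟩
    have := le_csSup hfin.bddAbove hs
    omega
  · apply le_csSup ((oneAdd_finite_iff S).mpr hfin).bddAbove
    exact ⟨sSup S, Nat.sSup_mem hS hfin.bddAbove, rfl⟩

lemma alphabet_XF {A : Set ℕ} {F : Set (List ℕ)} : alphabet (XF A F) ⊆ A := by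
  rintro b ⟨x, hx, i, rfl⟩
  exact hx.1 i

/-- The periodic point with ones at the multiples of `s₀ + 1`. -/
lemma periodic_mem {S : Set ℕ} (hS : S.Nonempty) (s₀ : ℕ) (hs₀ : s₀ ∈ S) :
    (fun i : ℤ => if ((s₀ : ℤ) + 1) ∣ i then 1 else 0) ∈ sGapShift S := by
  set D : ℤ := (s₀ : ℤ) + 1 with hD
  have hD0 : 0 < D := by omega
  set p : Point := fun i : ℤ => if D ∣ i then 1 else 0 with hp
  have hone : ∀ i : ℤ, p i = 1 ↔ D ∣ i := by
    intro i
    simp only [hp]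
    split <;> simp_all
  rw [sGapShift_mem hS]
  refine ⟨fun i => by by_cases h : D ∣ i <;> simp [hp, h], ?_, ?_⟩
  · rintro i k ⟨h1, h2, h3⟩
    have hdi : D ∣ i := (hone i).mp h1
    have hdk : D ∣ ((1 : ℤ) + k) := by
      have := (hone _).mp h3
      have h4 : i + 1 + (k : ℤ) = i + (1 + k) := by ring
      rw [h4] at this
      exact (Int.dvd_add_right hdi).mp this
    have hk1 : (1 : ℤ) + k ≤ D := by
      by_contra h
      push_neg at h
      have hs0k : s₀ < k := by omega
      have := h2 s₀ hs0k
      rw [show i + 1 + (s₀ : ℤ) = i + D by rw [hD]; ring] at this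
      have : p (i + D) = 1 := (hone _).mpr (dvd_add hdi (dvd_refl D))
      omega
    have := Int.le_of_dvd (by omega) hdk
    have : (1 : ℤ) + k = D := by omega
    have : k = s₀ := by omega
    exact this ▸ hs₀
  · intro hfin i n hrun
    by_contra h
    push_neg at h
    have hsup : s₀ ≤ sSup S := le_csSup hfin.bddAbove hs₀
    obtain ⟨j, hj1, hj2⟩ := dvd_window D hD0 i
    have : p (i + j) = 1 := (hone _).mpr hj2
    have := hrun j (by omega)
    omega
/-! ### Part 1: the expanded gap shift -/

lemma sGapForbidden_letters (S : Set ℕ) : ∀ w ∈ sGapForbidden S, ∀ l ∈ w, l ∈ ({0, 1} : Set ℕ) := by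
  intro w hw l hl
  have hgap : ∀ k : ℕ, l ∈ gapWord k → l ∈ ({0, 1} : Set ℕ) := by
    intro k hk
    rw [gapWord] at hk
    rcases List.mem_cons.mp hk with h | h
    · simp [h]
    · rcases List.mem_append.mp h with h | h
      · simp [(List.mem_replicate.mp h).2]
      · simp [List.mem_singleton.mp h]
  have hrep : l ∈ List.replicate (1 + sSup S) 0 → l ∈ ({0, 1} : Set ℕ) := by
    intro h
    simp [(List.mem_replicate.mp h).2]
  rw [sGapForbidden] at hw
  split at hw
  · rcases hw with ⟨k, -, -, rfl⟩ | hw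
    · exact hgap k hl
    · rw [Set.mem_singleton_iff] at hw
      subst hw
      exact hrep hl
  · obtain ⟨k, -, rfl⟩ := hw
    exact hgap k hl

def W1 (S : Set ℕ) : Set Point :=
  XF (insert 2 {0, 1}) (expandF {0, 1} (sGapForbidden S) 1 2)

lemma W1_eq (S : Set ℕ) : ReplaceWord [1] [1, 2] (sGapShift S) = W1 S :=
  replaceWord_eq {0, 1} (sGapForbidden S) 1 2 (by simp) (by simp)
    (sGapForbidden_letters S)

lemma expand_gapWord (k : ℕ) :
    expandWord 1 2 (gapWord k) = [1, 2] ++ (List.replicate k 0 ++ [1, 2]) := by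
  rw [gapWord, show (1 : ℕ) :: (List.replicate k 0 ++ [1]) =
        [1] ++ (List.replicate k 0 ++ [1]) from rfl,
      expandWord_append, expandWord_append, expandWord_singleton_self,
      expandWord_replicate 1 2 0 (by norm_num)]

section W1lemmas

variable {S : Set ℕ} {x : Point}

lemma W1_symbols (hx : x ∈ W1 S) : ∀ i, x i = 0 ∨ x i = 1 ∨ x i = 2 := by
  intro i
  have := hx.1 i
  simp [Set.mem_insert_iff] at this
  tauto

lemma W1_not11 (hx : x ∈ W1 S) {i : ℤ} (h : x i = 1) : x (i + 1) = 2 := by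
  rcases W1_symbols hx (i + 1) with h2 | h2 | h2
  · exfalso
    refine hx.2 [1, 0] (Or.inl (Or.inl ⟨0, by simp, rfl⟩)) ⟨i, ?_⟩
    rw [matchesAt_cons, matchesAt_singleton]
    exact ⟨h, h2⟩
  · exfalso
    refine hx.2 [1, 1] (Or.inl (Or.inl ⟨1, by simp, rfl⟩)) ⟨i, ?_⟩
    rw [matchesAt_cons, matchesAt_singleton]
    exact ⟨h, h2⟩
  · exact h2

lemma W1_pre2 (hx : x ∈ W1 S) {i : ℤ} (h : x (i + 1) = 2) : x i = 1 := by
  by_contra h2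
  refine hx.2 [x i, 2] (Or.inl (Or.inr ⟨x i, hx.1 i, h2, rfl⟩)) ⟨i, ?_⟩
  rw [matchesAt_cons, matchesAt_singleton]
  exact ⟨rfl, h⟩

lemma W1_run (hx : x ∈ W1 S) (hfin : S.Finite) {i : ℤ} {n : ℕ}
    (hrun : Run0 x i n) : n ≤ sSup S := by
  by_contra h
  push_neg at h
  refine hx.2 (List.replicate (1 + sSup S) 0) ?_ ⟨i, matchesAt_replicate0.mpr ?_⟩
  · refine Or.inr ⟨List.replicate (1 + sSup S) 0, ?_,
      expandWord_replicate 1 2 0 (by norm_num) _⟩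
    rw [sGapForbidden, if_pos hfin]
    exact Or.inr rfl
  · intro j hj
    exact hrun j (by omega)

lemma W1_gap (hx : x ∈ W1 S) (hS : S.Nonempty) {i : ℤ} {k : ℕ} (h1 : x i = 1)
    (h2 : ∀ j : ℕ, j < k → x (i + 2 + j) = 0) (h3 : x (i + 2 + k) = 1) : k ∈ S := by
  by_contra hk
  have hocc : occursIn (expandWord 1 2 (gapWord k)) x := by
    refine ⟨i, ?_⟩
    rw [expand_gapWord, matchesAt_append, matchesAt_append, matchesAt_cons,
      matchesAt_singleton, matchesAt_cons, matchesAt_singleton, matchesAt_replicate0]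
    have e1 : i + (([1, 2] : List ℕ).length : ℤ) = i + 2 := by simp
    have e2 : i + 2 + ((List.replicate k 0).length : ℤ) = i + 2 + k := by simp
    rw [e1, e2]
    refine ⟨⟨h1, W1_not11 hx h1⟩, fun j hj => h2 j hj, h3, ?_⟩
    rw [show i + 2 + (k : ℤ) + 1 = (i + 2 + k) + 1 by ring]
    exact W1_not11 hx h3
  by_cases hfin : S.Finite
  · rcases lt_trichotomy k (sSup S) with h | h | h
    · refine hx.2 _ (Or.inr ⟨gapWord k, ?_, rfl⟩) hocc
      rw [sGapForbidden, if_pos hfin]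
      exact Or.inl ⟨k, hk, h, rfl⟩
    · exact hk (h ▸ Nat.sSup_mem hS hfin.bddAbove)
    · have hrun : Run0 x (i + 2) (1 + sSup S) := fun j hj => h2 j (by omega)
      have := W1_run hx hfin hrun
      omega
  · refine hx.2 _ (Or.inr ⟨gapWord k, ?_, rfl⟩) hocc
    rw [sGapForbidden, if_neg hfin]
    exact ⟨k, hk, rfl⟩

end W1lemmas

lemma conj_W1 {S : Set ℕ} (hS : S.Nonempty) :
    Conjugate (W1 S) (sGapShift (oneAdd S)) := by
  set π : ℕ → ℕ := fun b => if b = 2 then 0 else b with hπ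
  have hπ1 : ∀ b, π b = 1 ↔ b = 1 := by
    intro b
    simp only [hπ]
    split <;> simp_all
  have hπ0 : ∀ b, π b = 0 ↔ (b = 0 ∨ b = 2) := by
    intro b
    simp only [hπ]
    split <;> simp_all
  apply conjugate_oneBlock _ _ π
  · -- maps to
    intro x hx
    rw [sGapShift_mem (oneAdd_nonempty hS)]
    refine ⟨?_, ?_, ?_⟩
    · intro i
      rcases W1_symbols hx i with h | h | h <;> simp [hπ, h]
    · rintro i k ⟨h1, h2, h3⟩
      have hx1 : x i = 1 := (hπ1 _).mp h1
      have hxe : x (i + 1 + k) = 1 := (hπ1 _).mp h3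
      cases k with
      | zero =>
        exfalso
        have := W1_not11 hx hx1
        rw [show i + 1 + ((0 : ℕ) : ℤ) = i + 1 by simp] at hxe
        rw [hxe] at this
        norm_num at this
      | succ k' =>
        have hmid : ∀ j : ℕ, j < k' → x (i + 2 + j) = 0 := by
          intro j hj
          have hj2 := h2 (j + 1) (by omega)
          rw [show i + 1 + ((j + 1 : ℕ) : ℤ) = i + 2 + j by push_cast; ring] at hj2
          rcases (hπ0 _).mp hj2 with h | h
          · exact h
          · exfalso
            have hpre : x (i + 1 + j) = 1 := by
              have := W1_pre2 hx (show x ((i + 1 + j) + 1) = 2 by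
                rw [show i + 1 + (j : ℤ) + 1 = i + 2 + j by ring]; exact h)
              exact this
            cases j with
            | zero =>
              have := W1_not11 hx hx1
              rw [show i + 1 + ((0 : ℕ) : ℤ) = i + 1 by simp] at hpre
              rw [hpre] at this
              norm_num at this
            | succ j' =>
              have hj3 := h2 (j' + 1) (by omega)
              rw [show i + 1 + ((j' + 1 : ℕ) : ℤ) = i + 1 + ((j' : ℕ) + 1) by
                push_cast; ring] at hj3
              rw [show i + 1 + ((j' + 1 : ℕ) : ℤ) = i + 1 + ((j' : ℕ) + 1) by
                push_cast; ring] at hpre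
              rcases (hπ0 _).mp hj3 with h4 | h4 <;> rw [hpre] at h4 <;> norm_num at h4
        have hend : x (i + 2 + k') = 1 := by
          rw [show i + 2 + (k' : ℤ) = i + 1 + ((k' : ℕ) + 1 : ℕ) by push_cast; ring]
          exact hxe
        have := W1_gap hx hS hx1 hmid hend
        exact succ_mem_oneAdd k' |>.mpr this
    · intro hfin' i n hrun
      have hfin : S.Finite := (oneAdd_finite_iff S).mp hfin'
      rw [sSup_oneAdd hS hfin]
      have hz : ∀ j : ℕ, 1 ≤ j → j < n → x (i + j) = 0 := by
        intro j h1j hjn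
        rcases (hπ0 _).mp (hrun j hjn) with h | h
        · exact h
        · exfalso
          obtain ⟨j', rfl⟩ : ∃ j' : ℕ, j = j' + 1 := ⟨j - 1, by omega⟩
          have hpre : x (i + j') = 1 := by
            apply W1_pre2 hx
            rw [show i + (j' : ℤ) + 1 = i + ((j' + 1 : ℕ) : ℤ) by push_cast; ring]
            exact h
          have h5 : π (x (i + j')) = 0 := hrun j' (by omega)
          rw [hpre] at h5
          simp [hπ] at h5
      have hrun2 : Run0 x (i + 1) (n - 1) := by
        intro j hj
        have := hz (j + 1) (by omega) (by omega)
        rw [show i + ((j + 1 : ℕ) : ℤ) = i + 1 + j by push_cast; ring] at this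
        exact this
      have := W1_run hx hfin hrun2
      omega
  · -- injective
    intro x hx x' hx' h
    funext i
    have hc : ∀ m : ℤ, π (x m) = π (x' m) := fun m => congrFun h m
    have key : ∀ m : ℤ, x m = 1 ↔ x' m = 1 := by
      intro m
      rw [← hπ1 (x m), ← hπ1 (x' m), hc m]
    rcases W1_symbols hx i with h1 | h1 | h1 <;>
      rcases W1_symbols hx' i with h2 | h2 | h2
    · rw [h1, h2]
    · exfalso
      have := hc i
      rw [h1, h2] at this
      simp [hπ] at this
    · exfalso
      have hpre : x' (i - 1) = 1 := W1_pre2 hx' (by rw [show i - 1 + 1 = i by ring]; exact h2)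
      have hpre' : x (i - 1) = 1 := (key (i - 1)).mpr hpre
      have := W1_not11 hx hpre'
      rw [show i - 1 + 1 = i by ring, h1] at this
      norm_num at this
    · exfalso
      have := hc i
      rw [h1, h2] at this
      simp [hπ] at this
    · rw [h1, h2]
    · exfalso
      have := hc i
      rw [h1, h2] at this
      simp [hπ] at this
    · exfalso
      have hpre : x (i - 1) = 1 := W1_pre2 hx (by rw [show i - 1 + 1 = i by ring]; exact h1)
      have hpre' : x' (i - 1) = 1 := (key (i - 1)).mp hpre
      have := W1_not11 hx' hpre'
      rw [show i - 1 + 1 = i by ring, h2] at this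
      norm_num at this
    · exfalso
      have := hc i
      rw [h1, h2] at this
      simp [hπ] at this
    · rw [h1, h2]
  · -- surjective
    intro z hz
    rw [sGapShift_mem (oneAdd_nonempty hS)] at hz
    obtain ⟨hzA, hzG, hzR⟩ := hz
    set x : Point := fun i => if z i = 0 ∧ z (i - 1) = 1 then 2 else z i with hxd
    have hx0 : ∀ i, x i = 0 → z i = 0 ∧ z (i - 1) ≠ 1 := by
      intro i hi
      simp only [hxd] at hi
      split at hi
      · norm_num at hi
      · rename_i hcond
        refine ⟨hi, ?_⟩
        intro h
        rw [hi] at hcond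
        exact hcond ⟨rfl, h⟩
    have hx1 : ∀ i, x i = 1 → z i = 1 := by
      intro i hi
      simp only [hxd] at hi
      split at hi
      · norm_num at hi
      · exact hi
    have hx2 : ∀ i, x i = 2 → z i = 0 ∧ z (i - 1) = 1 := by
      intro i hi
      simp only [hxd] at hi
      split at hi
      · assumption
      · rename_i hcond
        exfalso
        rcases hzA i with h | h <;> rw [hi] at h <;> norm_num at h
    have hzx1 : ∀ i, z i = 1 → x i = 1 := by
      intro i hi
      simp only [hxd]
      rw [if_neg (by rw [hi]; rintro ⟨h, -⟩; norm_num at h)]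
      exact hi
    refine ⟨x, ⟨?_, ?_⟩, ?_⟩
    · intro i
      simp only [hxd]
      split
      · simp
      · rcases hzA i with h | h <;> simp [h]
    · rintro w (hw | hw) ⟨m, hm⟩
      · rcases hw with ⟨b, hb, rfl⟩ | ⟨b, hb, hb1, rfl⟩
        · -- [1, b] with b ∈ {0, 1}
          rw [matchesAt_cons, matchesAt_singleton] at hm
          obtain ⟨h1, h2⟩ := hm
          have hz1 : z m = 1 := hx1 m h1
          rcases (by simpa using hb : b = 0 ∨ b = 1) with rfl | rfl
          · obtain ⟨h3, h4⟩ := hx0 (m + 1) h2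
            rw [show m + 1 - 1 = m by ring] at h4
            exact h4 hz1
          · have h3 : z (m + 1) = 1 := hx1 _ h2
            have : (0 : ℕ) ∈ oneAdd S := by
              refine hzG m 0 ⟨hz1, by omega, ?_⟩
              rw [show m + 1 + ((0 : ℕ) : ℤ) = m + 1 by simp]
              exact h3
            exact zero_not_mem_oneAdd S this
        · -- [b, 2] with b ≠ 1
          rw [matchesAt_cons, matchesAt_singleton] at hm
          obtain ⟨h1, h2⟩ := hm
          obtain ⟨h3, h4⟩ := hx2 (m + 1) h2
          rw [show m + 1 - 1 = m by ring] at h4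
          exact hb1 (h1 ▸ hzx1 m h4)
      · -- expanded forbidden words
        obtain ⟨w0, hw0, rfl⟩ := hw
        have hforb : (S.Finite ∧ (∃ k, k ∉ S ∧ k < sSup S ∧ w0 = gapWord k) ∨
            (S.Finite ∧ w0 = List.replicate (1 + sSup S) 0)) ∨
            (¬S.Finite ∧ ∃ k, k ∉ S ∧ w0 = gapWord k) := by
          rw [sGapForbidden] at hw0
          split at hw0
          · rcases hw0 with h | h
            · exact Or.inl (Or.inl ⟨by assumption, h⟩)
            · exact Or.inl (Or.inr ⟨by assumption, by simpa using h⟩)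
          · exact Or.inr ⟨by assumption, hw0⟩
        have hgapcase : ∀ k, k ∉ S → w0 = gapWord k → False := by
          rintro k hk rfl
          rw [expand_gapWord, matchesAt_append, matchesAt_append, matchesAt_cons,
            matchesAt_singleton, matchesAt_cons, matchesAt_singleton,
            matchesAt_replicate0] at hm
          have e1 : m + (([1, 2] : List ℕ).length : ℤ) = m + 2 := by simp
          have e2 : m + 2 + ((List.replicate k 0).length : ℤ) = m + 2 + k := by simp
          rw [e1, e2] at hm
          obtain ⟨⟨hm1, hm2⟩, hmid, hm3, -⟩ := hm
          have hz1 : z m = 1 := hx1 m hm1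
          have hz2 : z (m + 1) = 0 := (hx2 _ hm2).1
          have hzmid : ∀ j : ℕ, j < k → z (m + 2 + j) = 0 := by
            intro j hj
            exact (hx0 _ (hmid j hj)).1
          have hz3 : z (m + 2 + k) = 1 := hx1 _ hm3
          have : k + 1 ∈ oneAdd S := by
            refine hzG m (k + 1) ⟨hz1, ?_, ?_⟩
            · intro j hj
              cases j with
              | zero => simpa using hz2
              | succ j' =>
                have := hzmid j' (by omega)
                rw [show m + 1 + ((j' + 1 : ℕ) : ℤ) = m + 2 + j' by push_cast; ring]
                exact this
            · rw [show m + 1 + ((k + 1 : ℕ) : ℤ) = m + 2 + k by push_cast; ring]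
              exact hz3
          exact hk ((succ_mem_oneAdd k).mp this)
        rcases hforb with (⟨hfin, k, hk, -, hw0'⟩ | ⟨hfin, hw0'⟩) | ⟨hfin, k, hk, hw0'⟩
        · exact hgapcase k hk hw0'
        · -- long run of zeros
          subst hw0'
          rw [expandWord_replicate 1 2 0 (by norm_num), matchesAt_replicate0] at hm
          have hzrun : ∀ j : ℕ, j < 1 + sSup S → z (m + j) = 0 := by
            intro j hj
            exact (hx0 _ (hm j hj)).1
          have hfirst := hx0 m (by simpa using hm 0 (by omega))
          have hzm1 : z (m - 1) = 0 := by
            rcases hzA (m - 1) with h | h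
            · exact h
            · exact absurd h hfirst.2
          have hrun2 : Run0 z (m - 1) (2 + sSup S) := by
            intro j hj
            cases j with
            | zero => simpa using hzm1
            | succ j' =>
              rw [show m - 1 + ((j' + 1 : ℕ) : ℤ) = m + j' by push_cast; ring]
              exact hzrun j' (by omega)
          have := hzR ((oneAdd_finite_iff S).mpr hfin) (m - 1) (2 + sSup S) hrun2
          rw [sSup_oneAdd hS hfin] at this
          omega
        · exact hgapcase k hk hw0'
    · -- π ∘ x = z
      funext i
      simp only [hxd, hπ]
      split
      · rename_i hcond
        rw [if_pos rfl]
        exact hcond.1.symm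
      · rcases hzA i with h | h <;> rw [h] <;> norm_num
lemma finite01 : ({0, 1} : Set ℕ).Finite := (Set.finite_singleton 1).insert 0

lemma shiftspace_sGap (S : Set ℕ) : IsShiftSpace (sGapShift S) :=
  ⟨{0, 1}, finite01, sGapForbidden S, rfl⟩

lemma shiftspace_W1 (S : Set ℕ) : IsShiftSpace (W1 S) :=
  ⟨insert 2 {0, 1}, finite01.insert 2, _, rfl⟩

lemma one_mem_alphabet_sGap {S : Set ℕ} (hS : S.Nonempty) :
    1 ∈ alphabet (sGapShift S) := by
  obtain ⟨s₀, hs₀⟩ := id hS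
  refine ⟨_, periodic_mem hS s₀ hs₀, 0, ?_⟩
  rw [if_pos (dvd_zero _)]

lemma two_not_mem_alphabet_sGap (S : Set ℕ) : 2 ∉ alphabet (sGapShift S) := by
  intro h
  have := alphabet_XF h
  simp at this

lemma step1 {S : Set ℕ} (hS : S.Nonempty) :
    FlowEquiv (sGapShift S) (sGapShift (oneAdd S)) := by
  have hstepA : FEStep (sGapShift S) (W1 S) := by
    refine ⟨shiftspace_sGap S, shiftspace_W1 S, Or.inr (Or.inr (Or.inl ?_))⟩
    exact ⟨1, 2, one_mem_alphabet_sGap hS, two_not_mem_alphabet_sGap S, (W1_eq S).symm⟩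
  have hstepB : FEStep (W1 S) (sGapShift (oneAdd S)) := by
    refine ⟨shiftspace_W1 S, shiftspace_sGap _, Or.inl (conj_W1 hS)⟩
  exact flowEquiv_trans (flowEquiv_single hstepA) (flowEquiv_single hstepB)

lemma part1 {S : Set ℕ} (hS : S.Nonempty) (k : ℕ) :
    FlowEquiv (sGapShift {n : ℕ | ∃ s ∈ S, n = k + s}) (sGapShift S) := by
  induction k with
  | zero =>
    have h : {n : ℕ | ∃ s ∈ S, n = 0 + s} = S := by
      ext n
      simp
    rw [h]
    exact Relation.ReflTransGen.refl
  | succ k ih =>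
    have h : {n : ℕ | ∃ s ∈ S, n = (k + 1) + s} = oneAdd {n : ℕ | ∃ s ∈ S, n = k + s} := by
      ext n
      constructor
      · rintro ⟨s, hs, rfl⟩
        exact ⟨k + s, ⟨s, hs, rfl⟩, by omega⟩
      · rintro ⟨m, ⟨s, hs, rfl⟩, rfl⟩
        exact ⟨s, hs, by omega⟩
    rw [h]
    have hne : {n : ℕ | ∃ s ∈ S, n = k + s}.Nonempty := by
      obtain ⟨s, hs⟩ := hS
      exact ⟨k + s, s, hs, rfl⟩
    exact flowEquiv_trans (flowEquiv_symm (step1 hne)) ih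
/-! ### Part 2: marked gap shifts -/

def ZF (S : Set ℕ) (c : ℕ) : Set (List ℕ) :=
  {w | ∃ k e : ℕ, (e = 1 ∨ e = 2) ∧ k ∉ S ∧ (S.Finite → k ≤ max (sSup S) c) ∧ w = gw 1 k e} ∪
  {w | ∃ k e : ℕ, (e = 1 ∨ e = 2) ∧ k < c ∧ w = gw 2 k e} ∪
  {(2 : ℕ) :: List.replicate (c + 1) 0} ∪
  {w | S.Finite ∧ w = List.replicate (1 + max (sSup S) c) 0}

def Zsh (S : Set ℕ) (c : ℕ) : Set Point := XF {0, 1, 2} (ZF S c)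

lemma finite012 : ({0, 1, 2} : Set ℕ).Finite :=
  ((Set.finite_singleton 2).insert 1).insert 0

lemma shiftspace_Zsh (S : Set ℕ) (c : ℕ) : IsShiftSpace (Zsh S c) :=
  ⟨{0, 1, 2}, finite012, ZF S c, rfl⟩

lemma gw_letters {p k e l : ℕ} (h : l ∈ gw p k e) : l = p ∨ l = 0 ∨ l = e := by
  rw [gw] at h
  rcases List.mem_cons.mp h with h | h
  · exact Or.inl h
  · rcases List.mem_append.mp h with h | h
    · exact Or.inr (Or.inl (List.mem_replicate.mp h).2)
    · exact Or.inr (Or.inr (List.mem_singleton.mp h))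

lemma ZF_letters (S : Set ℕ) (c : ℕ) : ∀ w ∈ ZF S c, ∀ l ∈ w, l ∈ ({0, 1, 2} : Set ℕ) := by
  rintro w (((⟨k, e, he, -, -, rfl⟩ | ⟨k, e, he, -, rfl⟩) | hw) | ⟨-, rfl⟩) l hl
  · rcases gw_letters hl with h | h | h <;> rcases he with rfl | rfl <;> simp [h]
  · rcases gw_letters hl with h | h | h <;> rcases he with rfl | rfl <;> simp [h]
  · rw [Set.mem_singleton_iff] at hw
    subst hw
    rcases List.mem_cons.mp hl with h | h
    · simp [h]
    · simp [(List.mem_replicate.mp h).2]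
  · simp [(List.mem_replicate.mp hl).2]

section Zlemmas

variable {S : Set ℕ} {c : ℕ} {x : Point}

lemma Z_symbols (hx : x ∈ Zsh S c) : ∀ i, x i = 0 ∨ x i = 1 ∨ x i = 2 := by
  intro i
  have := hx.1 i
  simpa [Set.mem_insert_iff] using this

lemma Z_after2_run (hx : x ∈ Zsh S c) {i : ℤ} (h : x i = 2) :
    ∀ j : ℕ, j < c → x (i + 1 + j) = 0 := by
  intro j
  induction j using Nat.strong_induction_on with
  | _ j ih =>
    intro hj
    rcases Z_symbols hx (i + 1 + j) with h0 | h0 | h0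
    · exact h0
    all_goals
      exfalso
      refine hx.2 (gw 2 j (x (i + 1 + j)))
        (Or.inl (Or.inl (Or.inr ⟨j, x (i + 1 + j), by rw [h0]; simp, hj, rfl⟩)))
        ⟨i, matchesAt_gw.mpr ⟨h, fun j' hj' => ih j' hj' (by omega), rfl⟩⟩

lemma Z_after2_end (hx : x ∈ Zsh S c) {i : ℤ} (h : x i = 2) :
    x (i + 1 + c) = 1 ∨ x (i + 1 + c) = 2 := by
  rcases Z_symbols hx (i + 1 + c) with h0 | h0 | h0
  · exfalso
    refine hx.2 ((2 : ℕ) :: List.replicate (c + 1) 0)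
      (Or.inl (Or.inr rfl)) ⟨i, matchesAt_cons_rep.mpr ⟨h, ?_⟩⟩
    intro j hj
    rcases Nat.lt_or_ge j c with h1 | h1
    · exact Z_after2_run hx h j h1
    · have : j = c := by omega
      subst this
      exact h0
  · exact Or.inl h0
  · exact Or.inr h0

lemma Z_run (hx : x ∈ Zsh S c) (hfin : S.Finite) {i : ℤ} {n : ℕ}
    (hrun : Run0 x i n) : n ≤ max (sSup S) c := by
  by_contra h
  push_neg at h
  refine hx.2 (List.replicate (1 + max (sSup S) c) 0) (Or.inr ⟨hfin, rfl⟩)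
    ⟨i, matchesAt_replicate0.mpr fun j hj => hrun j (by omega)⟩

lemma Z_gap1 (hx : x ∈ Zsh S c) {i : ℤ} {k : ℕ} (h1 : x i = 1)
    (h2 : ∀ j : ℕ, j < k → x (i + 1 + j) = 0)
    (h3 : x (i + 1 + k) = 1 ∨ x (i + 1 + k) = 2) : k ∈ S := by
  by_contra hk
  by_cases hfin : S.Finite
  · rcases Nat.lt_or_ge (max (sSup S) c) k with h | h
    · have hrun : Run0 x (i + 1) (1 + max (sSup S) c) := fun j hj => h2 j (by omega)
      have := Z_run hx hfin hrun
      omega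
    · refine hx.2 (gw 1 k (x (i + 1 + k)))
        (Or.inl (Or.inl (Or.inl ⟨k, x (i + 1 + k), by tauto, hk, fun _ => h, rfl⟩)))
        ⟨i, matchesAt_gw.mpr ⟨h1, h2, rfl⟩⟩
  · refine hx.2 (gw 1 k (x (i + 1 + k)))
      (Or.inl (Or.inl (Or.inl ⟨k, x (i + 1 + k), by tauto, hk, fun h => absurd h hfin, rfl⟩)))
      ⟨i, matchesAt_gw.mpr ⟨h1, h2, rfl⟩⟩

lemma Z_mark_iff (hx : x ∈ Zsh S c) (hc : c ∉ S) {i : ℤ} :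
    x i = 2 ↔ ((x i = 1 ∨ x i = 2) ∧ (∀ j : ℕ, j < c → x (i + 1 + j) = 0) ∧
      (x (i + 1 + c) = 1 ∨ x (i + 1 + c) = 2)) := by
  constructor
  · intro h
    exact ⟨Or.inr h, Z_after2_run hx h, Z_after2_end hx h⟩
  · rintro ⟨h1 | h1, h2, h3⟩
    · exact absurd (Z_gap1 hx h1 h2 h3) hc
    · exact h1

end Zlemmas

/-- The periodic point with twos at the multiples of `c + 1`. -/
lemma periodic_mem_Zsh (S : Set ℕ) (c : ℕ) :
    (fun i : ℤ => if ((c : ℤ) + 1) ∣ i then 2 else 0) ∈ Zsh S c := by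
  set D : ℤ := (c : ℤ) + 1 with hD
  have hD0 : 0 < D := by omega
  set q : Point := fun i : ℤ => if D ∣ i then 2 else 0 with hq
  have htwo : ∀ i : ℤ, q i = 2 ↔ D ∣ i := by
    intro i
    simp only [hq]
    split <;> simp_all
  have hnone : ∀ i : ℤ, q i ≠ 1 := by
    intro i
    simp only [hq]
    split <;> simp
  constructor
  · intro i
    simp only [hq]
    split <;> simp
  · rintro w (((⟨k, e, he, -, -, rfl⟩ | ⟨k, e, he, hk, rfl⟩) | hw) | ⟨hfin, rfl⟩) ⟨m, hm⟩
    · rw [matchesAt_gw] at hm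
      exact hnone m hm.1
    · rw [matchesAt_gw] at hm
      obtain ⟨h1, h2, h3⟩ := hm
      have he2 : q (m + 1 + k) = 2 := by
        rcases he with rfl | rfl
        · exact absurd h3 (hnone _)
        · exact h3
      have hdm : D ∣ m := (htwo m).mp h1
      have hdk : D ∣ (1 + (k : ℤ)) := by
        have := (htwo _).mp he2
        have h4 : m + 1 + (k : ℤ) = m + (1 + k) := by ring
        rw [h4] at this
        exact (Int.dvd_add_right hdm).mp this
      have := Int.le_of_dvd (by omega) hdk
      omega
    · rw [Set.mem_singleton_iff] at hw
      subst hw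
      rw [matchesAt_cons_rep] at hm
      obtain ⟨h1, h2⟩ := hm
      have hdm : D ∣ m := (htwo m).mp h1
      have h3 := h2 c (by omega)
      have h4 : q (m + 1 + c) = 2 := (htwo _).mpr (by
        have : m + 1 + (c : ℤ) = m + D := by rw [hD]; ring
        rw [this]
        exact dvd_add hdm (dvd_refl D))
      omega
    · rw [matchesAt_replicate0] at hm
      obtain ⟨j, hj1, hj2⟩ := dvd_window D hD0 m
      have h4 : q (m + j) = 2 := (htwo _).mpr hj2
      have := hm j (by omega)
      omega

lemma insert_finite_iff (c : ℕ) (S : Set ℕ) : (insert c S).Finite ↔ S.Finite :=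
  ⟨fun h => h.subset (Set.subset_insert c S), fun h => h.insert c⟩

lemma sSup_insert_nat {S : Set ℕ} (hS : S.Nonempty) (hfin : S.Finite) (c : ℕ) :
    sSup (insert c S) = max c (sSup S) := by
  rw [csSup_insert hfin.bddAbove hS]
lemma conj_Z {S : Set ℕ} (hS : S.Nonempty) {c : ℕ} (hc : c ∉ S) :
    Conjugate (Zsh S c) (sGapShift (insert c S)) := by
  classical
  have hins : (insert c S).Nonempty := ⟨c, Set.mem_insert c S⟩
  set π : ℕ → ℕ := fun b => if b = 2 then 1 else b with hπ
  have hπ1 : ∀ b, π b = 1 ↔ (b = 1 ∨ b = 2) := by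
    intro b
    simp only [hπ]
    split <;> simp_all
  have hπ0 : ∀ b, π b = 0 ↔ b = 0 := by
    intro b
    simp only [hπ]
    split <;> simp_all
  apply conjugate_oneBlock _ _ π
  · -- maps to
    intro x hx
    rw [sGapShift_mem hins]
    refine ⟨?_, ?_, ?_⟩
    · intro i
      rcases Z_symbols hx i with h | h | h <;> simp [hπ, h]
    · rintro i k ⟨h1, h2, h3⟩
      have hzeros : ∀ j : ℕ, j < k → x (i + 1 + j) = 0 := by
        intro j hj
        exact (hπ0 _).mp (h2 j hj)
      have hend : x (i + 1 + k) = 1 ∨ x (i + 1 + k) = 2 := (hπ1 _).mp h3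
      rcases (hπ1 _).mp h1 with h | h
      · exact Set.mem_insert_of_mem c (Z_gap1 hx h hzeros hend)
      · have hkc : k = c := by
          rcases lt_trichotomy k c with h5 | h5 | h5
          · exfalso
            have := Z_after2_run hx h k h5
            rcases hend with h6 | h6 <;> rw [this] at h6 <;> norm_num at h6
          · exact h5
          · exfalso
            have h6 := hzeros c h5
            rcases Z_after2_end hx h with h7 | h7 <;> rw [h6] at h7 <;> norm_num at h7
        subst hkc
        exact Set.mem_insert k S
    · intro hfin' i n hrun
      have hfin : S.Finite := (insert_finite_iff c S).mp hfin'
      rw [sSup_insert_nat hS hfin]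
      have := Z_run hx hfin (fun j hj => (hπ0 _).mp (hrun j hj))
      omega
  · -- injective
    intro x hx x' hx' h
    have hc2 : ∀ m : ℤ, π (x m) = π (x' m) := fun m => congrFun h m
    have hobs : ∀ (u : Point), u ∈ Zsh S c → ∀ m : ℤ,
        (u m = 2 ↔ (π (u m) = 1 ∧ (∀ j : ℕ, j < c → π (u (m + 1 + j)) = 0) ∧
          π (u (m + 1 + c)) = 1)) := by
      intro u hu m
      rw [Z_mark_iff hu hc]
      constructor
      · rintro ⟨h1, h2, h3⟩
        exact ⟨(hπ1 _).mpr h1, fun j hj => (hπ0 _).mpr (h2 j hj), (hπ1 _).mpr h3⟩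
      · rintro ⟨h1, h2, h3⟩
        exact ⟨(hπ1 _).mp h1, fun j hj => (hπ0 _).mp (h2 j hj), (hπ1 _).mp h3⟩
    have h2iff : ∀ m : ℤ, x m = 2 ↔ x' m = 2 := by
      intro m
      rw [hobs x hx m, hobs x' hx' m]
      constructor
      · rintro ⟨h1, h2, h3⟩
        exact ⟨hc2 m ▸ h1, fun j hj => hc2 _ ▸ h2 j hj, hc2 _ ▸ h3⟩
      · rintro ⟨h1, h2, h3⟩
        exact ⟨(hc2 m).symm ▸ h1, fun j hj => (hc2 _).symm ▸ h2 j hj, (hc2 _).symm ▸ h3⟩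
    funext i
    rcases Z_symbols hx i with h1 | h1 | h1
    · have := hc2 i
      rw [h1] at this
      rcases Z_symbols hx' i with h2 | h2 | h2
      · rw [h1, h2]
      · rw [h2] at this
        simp [hπ] at this
      · rw [h2] at this
        simp [hπ] at this
    · have hx2 : x' i ≠ 2 := fun h2 => by
        rw [← h2iff i] at h2
        rw [h2] at h1
        norm_num at h1
      have := hc2 i
      rw [h1] at this
      rcases Z_symbols hx' i with h2 | h2 | h2
      · rw [h2] at this
        simp [hπ] at this
      · rw [h1, h2]
      · exact absurd h2 hx2
    · rw [h1, ((h2iff i).mp h1)]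
  · -- surjective
    intro z hz
    rw [sGapShift_mem hins] at hz
    obtain ⟨hzA, hzG, hzR⟩ := hz
    set x : Point := fun i =>
      if z i = 1 ∧ (∀ j : ℕ, j < c → z (i + 1 + j) = 0) ∧ z (i + 1 + c) = 1 then 2 else z i
      with hxd
    have hx0 : ∀ i, x i = 0 → z i = 0 := by
      intro i hi
      simp only [hxd] at hi
      split at hi
      · norm_num at hi
      · exact hi
    have hx1 : ∀ i, x i = 1 →
        z i = 1 ∧ ¬(z i = 1 ∧ (∀ j : ℕ, j < c → z (i + 1 + j) = 0) ∧ z (i + 1 + c) = 1) := by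
      intro i hi
      simp only [hxd] at hi
      split at hi
      · norm_num at hi
      · rename_i hcond
        exact ⟨hi, hcond⟩
    have hx2 : ∀ i, x i = 2 →
        z i = 1 ∧ (∀ j : ℕ, j < c → z (i + 1 + j) = 0) ∧ z (i + 1 + c) = 1 := by
      intro i hi
      simp only [hxd] at hi
      split at hi
      · assumption
      · rename_i hcond
        exfalso
        rcases hzA i with h | h <;> rw [hi] at h <;> norm_num at h
    have hxe : ∀ i, x i = 1 ∨ x i = 2 → z i = 1 := by
      intro i hi
      rcases hi with h | h
      · exact (hx1 i h).1
      · exact (hx2 i h).1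
    refine ⟨x, ⟨?_, ?_⟩, ?_⟩
    · intro i
      simp only [hxd]
      split
      · simp
      · rcases hzA i with h | h <;> simp [h]
    · rintro w (((⟨k, e, he, hk, hkb, rfl⟩ | ⟨k, e, he, hk, rfl⟩) | hw) | ⟨hfin, rfl⟩) ⟨m, hm⟩
      · -- unmarked gap words
        rw [matchesAt_gw] at hm
        obtain ⟨h1, h2, h3⟩ := hm
        obtain ⟨hz1, hnm⟩ := hx1 m h1
        have hzer : ∀ j : ℕ, j < k → z (m + 1 + j) = 0 := fun j hj => hx0 _ (h2 j hj)
        have hzend : z (m + 1 + k) = 1 := hxe _ (by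
          rcases he with rfl | rfl
          · exact Or.inl h3
          · exact Or.inr h3)
        have : k ∈ insert c S := hzG m k ⟨hz1, hzer, hzend⟩
        rcases Set.mem_insert_iff.mp this with rfl | h
        · exact hnm ⟨hz1, hzer, hzend⟩
        · exact hk h
      · -- marked gap words that are too short
        rw [matchesAt_gw] at hm
        obtain ⟨h1, h2, h3⟩ := hm
        obtain ⟨-, hzer, -⟩ := hx2 m h1
        have hzend : z (m + 1 + k) = 1 := hxe _ (by
          rcases he with rfl | rfl
          · exact Or.inl h3
          · exact Or.inr h3)
        have := hzer k hk
        omega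
      · -- marked gap word that is too long
        rw [Set.mem_singleton_iff] at hw
        subst hw
        rw [matchesAt_cons_rep] at hm
        obtain ⟨h1, h2⟩ := hm
        obtain ⟨-, -, hzend⟩ := hx2 m h1
        have := hx0 _ (h2 c (by omega))
        omega
      · -- long runs of zeros
        rw [matchesAt_replicate0] at hm
        have hrun : Run0 z m (1 + max (sSup S) c) := fun j hj => hx0 _ (hm j hj)
        have := hzR ((insert_finite_iff c S).mpr hfin) m _ hrun
        rw [sSup_insert_nat hS hfin] at this
        omega
    · funext i
      simp only [hxd, hπ]
      split
      · rename_i hcond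
        rw [if_pos rfl]
        exact hcond.1.symm
      · rcases hzA i with h | h <;> rw [h] <;> norm_num
/-! ### The expansion of the marked gap shift -/

def W2 (S : Set ℕ) (c : ℕ) : Set Point :=
  XF (insert 3 {0, 1, 2}) (expandF {0, 1, 2} (ZF S c) 2 3)

lemma W2_eq (S : Set ℕ) (c : ℕ) : ReplaceWord [2] [2, 3] (Zsh S c) = W2 S c :=
  replaceWord_eq {0, 1, 2} (ZF S c) 2 3 (by simp) (by simp) (ZF_letters S c)

lemma shiftspace_W2 (S : Set ℕ) (c : ℕ) : IsShiftSpace (W2 S c) :=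
  ⟨insert 3 {0, 1, 2}, finite012.insert 3, _, rfl⟩

lemma matchesAt_expandE {e : ℕ} (he : e = 1 ∨ e = 2) {x : Point} {m : ℤ} :
    MatchesAt (expandWord 2 3 [e]) x m ↔ (x m = e ∧ (e = 2 → x (m + 1) = 3)) := by
  rcases he with rfl | rfl
  · rw [expandWord_singleton 2 3 1 (by norm_num), matchesAt_singleton]
    simp
  · rw [expandWord_singleton_self, matchesAt_cons, matchesAt_singleton]
    simp

lemma expand_gw1 (k e : ℕ) :
    expandWord 2 3 (gw 1 k e) = [1] ++ (List.replicate k 0 ++ expandWord 2 3 [e]) := by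
  rw [gw, show (1 : ℕ) :: (List.replicate k 0 ++ [e]) = [1] ++ (List.replicate k 0 ++ [e])
      from rfl, expandWord_append, expandWord_append,
    expandWord_singleton 2 3 1 (by norm_num), expandWord_replicate 2 3 0 (by norm_num)]

lemma expand_gw2 (k e : ℕ) :
    expandWord 2 3 (gw 2 k e) = [2, 3] ++ (List.replicate k 0 ++ expandWord 2 3 [e]) := by
  rw [gw, show (2 : ℕ) :: (List.replicate k 0 ++ [e]) = [2] ++ (List.replicate k 0 ++ [e])
      from rfl, expandWord_append, expandWord_append, expandWord_singleton_self,
    expandWord_replicate 2 3 0 (by norm_num)]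

lemma matchesAt_expand_gw1 {k e : ℕ} (he : e = 1 ∨ e = 2) {x : Point} {m : ℤ} :
    MatchesAt (expandWord 2 3 (gw 1 k e)) x m ↔
      (x m = 1 ∧ (∀ j : ℕ, j < k → x (m + 1 + j) = 0) ∧ x (m + 1 + k) = e ∧
        (e = 2 → x (m + 1 + k + 1) = 3)) := by
  rw [expand_gw1, matchesAt_append, matchesAt_append, matchesAt_singleton,
    matchesAt_replicate0]
  have e1 : m + (([1] : List ℕ).length : ℤ) = m + 1 := by simp
  have e2 : m + 1 + ((List.replicate k 0).length : ℤ) = m + 1 + k := by simp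
  rw [e1, e2, matchesAt_expandE he]
  unfold Run0
  tauto

lemma matchesAt_expand_gw2 {k e : ℕ} (he : e = 1 ∨ e = 2) {x : Point} {m : ℤ} :
    MatchesAt (expandWord 2 3 (gw 2 k e)) x m ↔
      (x m = 2 ∧ x (m + 1) = 3 ∧ (∀ j : ℕ, j < k → x (m + 2 + j) = 0) ∧ x (m + 2 + k) = e ∧
        (e = 2 → x (m + 2 + k + 1) = 3)) := by
  rw [expand_gw2, matchesAt_append, matchesAt_append, matchesAt_cons, matchesAt_singleton,
    matchesAt_replicate0]
  have e1 : m + (([2, 3] : List ℕ).length : ℤ) = m + 2 := by simp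
  have e2 : m + 2 + ((List.replicate k 0).length : ℤ) = m + 2 + k := by simp
  rw [e1, e2, matchesAt_expandE he]
  unfold Run0
  tauto

lemma expand_tail (c : ℕ) :
    expandWord 2 3 ((2 : ℕ) :: List.replicate (c + 1) 0) =
      [2, 3] ++ List.replicate (c + 1) 0 := by
  rw [show (2 : ℕ) :: List.replicate (c + 1) 0 = [2] ++ List.replicate (c + 1) 0 from rfl,
    expandWord_append, expandWord_singleton_self, expandWord_replicate 2 3 0 (by norm_num)]

section W2lemmas

variable {S : Set ℕ} {c : ℕ} {x : Point}

lemma W2_symbols (hx : x ∈ W2 S c) : ∀ i, x i = 0 ∨ x i = 1 ∨ x i = 2 ∨ x i = 3 := by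
  intro i
  have := hx.1 i
  simp [Set.mem_insert_iff] at this
  tauto

lemma W2_after2 (hx : x ∈ W2 S c) {i : ℤ} (h : x i = 2) : x (i + 1) = 3 := by
  have hforb : ∀ b : ℕ, b ∈ ({0, 1, 2} : Set ℕ) → x (i + 1) = b → False := by
    intro b hb hxb
    refine hx.2 [2, b] (Or.inl (Or.inl ⟨b, hb, rfl⟩)) ⟨i, ?_⟩
    rw [matchesAt_cons, matchesAt_singleton]
    exact ⟨h, hxb⟩
  rcases W2_symbols hx (i + 1) with h2 | h2 | h2 | h2
  · exact (hforb 0 (by simp) h2).elim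
  · exact (hforb 1 (by simp) h2).elim
  · exact (hforb 2 (by simp) h2).elim
  · exact h2

lemma W2_pre3 (hx : x ∈ W2 S c) {i : ℤ} (h : x (i + 1) = 3) : x i = 2 := by
  by_contra h2
  refine hx.2 [x i, 3] (Or.inl (Or.inr ⟨x i, hx.1 i, h2, rfl⟩)) ⟨i, ?_⟩
  rw [matchesAt_cons, matchesAt_singleton]
  exact ⟨rfl, h⟩

lemma W2_run (hx : x ∈ W2 S c) (hfin : S.Finite) {i : ℤ} {n : ℕ}
    (hrun : Run0 x i n) : n ≤ max (sSup S) c := by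
  by_contra h
  push_neg at h
  refine hx.2 (List.replicate (1 + max (sSup S) c) 0)
    (Or.inr ⟨_, Or.inr ⟨hfin, rfl⟩, expandWord_replicate 2 3 0 (by norm_num) _⟩)
    ⟨i, matchesAt_replicate0.mpr fun j hj => hrun j (by omega)⟩

lemma W2_gap1 (hx : x ∈ W2 S c) {i : ℤ} {k : ℕ} (h1 : x i = 1)
    (h2 : ∀ j : ℕ, j < k → x (i + 1 + j) = 0)
    (h3 : x (i + 1 + k) = 1 ∨ x (i + 1 + k) = 2) : k ∈ S := by
  by_contra hk
  have hocc : occursIn (expandWord 2 3 (gw 1 k (x (i + 1 + k)))) x := by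
    refine ⟨i, (matchesAt_expand_gw1 h3).mpr ⟨h1, h2, rfl, fun h => W2_after2 hx h⟩⟩
  by_cases hfin : S.Finite
  · rcases Nat.lt_or_ge (max (sSup S) c) k with h | h
    · have hrun : Run0 x (i + 1) (1 + max (sSup S) c) := fun j hj => h2 j (by omega)
      have := W2_run hx hfin hrun
      omega
    · exact hx.2 _ (Or.inr ⟨gw 1 k (x (i + 1 + k)),
        Or.inl (Or.inl (Or.inl ⟨k, _, by tauto, hk, fun _ => h, rfl⟩)), rfl⟩) hocc
  · exact hx.2 _ (Or.inr ⟨gw 1 k (x (i + 1 + k)),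
      Or.inl (Or.inl (Or.inl ⟨k, _, by tauto, hk, fun h => absurd h hfin, rfl⟩)), rfl⟩) hocc

lemma W2_after23 (hx : x ∈ W2 S c) {i : ℤ} (h : x i = 2) :
    (∀ j : ℕ, j < c → x (i + 2 + j) = 0) ∧ (x (i + 2 + c) = 1 ∨ x (i + 2 + c) = 2) := by
  have h3 : x (i + 1) = 3 := W2_after2 hx h
  have hfirst : ∀ j : ℕ, j < c → x (i + 2 + j) = 0 := by
    intro j
    induction j using Nat.strong_induction_on with
    | _ j ih =>
      intro hj
      rcases W2_symbols hx (i + 2 + j) with h0 | h0 | h0 | h0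
      · exact h0
      · exfalso
        refine hx.2 _ (Or.inr ⟨gw 2 j 1, Or.inl (Or.inl (Or.inr ⟨j, 1, by tauto, hj, rfl⟩)),
          rfl⟩) ⟨i, (matchesAt_expand_gw2 (Or.inl rfl)).mpr
            ⟨h, h3, fun j' hj' => ih j' hj' (by omega), h0, by norm_num⟩⟩
      · exfalso
        refine hx.2 _ (Or.inr ⟨gw 2 j 2, Or.inl (Or.inl (Or.inr ⟨j, 2, by tauto, hj, rfl⟩)),
          rfl⟩) ⟨i, (matchesAt_expand_gw2 (Or.inr rfl)).mpr
            ⟨h, h3, fun j' hj' => ih j' hj' (by omega), h0, fun _ => W2_after2 hx h0⟩⟩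
      · exfalso
        have hpre : x (i + 2 + j - 1) = 2 := by
          apply W2_pre3 hx
          rw [show i + 2 + (j : ℤ) - 1 + 1 = i + 2 + j by ring]
          exact h0
        cases j with
        | zero =>
          rw [show i + 2 + ((0 : ℕ) : ℤ) - 1 = i + 1 by push_cast; ring, h3] at hpre
          norm_num at hpre
        | succ j' =>
          rw [show i + 2 + ((j' + 1 : ℕ) : ℤ) - 1 = i + 2 + j' by push_cast; ring,
            ih j' (by omega) (by omega)] at hpre
          norm_num at hpre
  refine ⟨hfirst, ?_⟩
  rcases W2_symbols hx (i + 2 + c) with h0 | h0 | h0 | h0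
  · exfalso
    refine hx.2 _ (Or.inr ⟨(2 : ℕ) :: List.replicate (c + 1) 0, Or.inl (Or.inr rfl),
      expand_tail c⟩) ⟨i, ?_⟩
    rw [matchesAt_append, matchesAt_cons, matchesAt_singleton, matchesAt_replicate0]
    have e1 : i + (([2, 3] : List ℕ).length : ℤ) = i + 2 := by simp
    rw [e1]
    refine ⟨⟨h, h3⟩, ?_⟩
    intro j hj
    rcases Nat.lt_or_ge j c with h5 | h5
    · exact hfirst j h5
    · have : j = c := by omega
      subst this
      exact h0
  · exact Or.inl h0
  · exact Or.inr h0
  · exfalso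
    have hpre : x (i + 2 + c - 1) = 2 := by
      apply W2_pre3 hx
      rw [show i + 2 + (c : ℤ) - 1 + 1 = i + 2 + c by ring]
      exact h0
    cases c with
    | zero =>
      rw [show i + 2 + ((0 : ℕ) : ℤ) - 1 = i + 1 by push_cast; ring, h3] at hpre
      norm_num at hpre
    | succ c' =>
      rw [show i + 2 + ((c' + 1 : ℕ) : ℤ) - 1 = i + 2 + c' by push_cast; ring,
        hfirst c' (by omega)] at hpre
      norm_num at hpre

lemma W2_3iff (hx : x ∈ W2 S c) {i : ℤ} : x i = 3 ↔ x (i - 1) = 2 := by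
  constructor
  · intro h
    apply W2_pre3 hx
    rw [show i - 1 + 1 = i by ring]
    exact h
  · intro h
    have := W2_after2 hx h
    rw [show i - 1 + 1 = i by ring] at this
    exact this

end W2lemmas
lemma max_succ_le (u c : ℕ) : max u (c + 1) ≤ max u c + 1 :=
  max_le (le_trans (le_max_left u c) (by omega)) (by have := le_max_right u c; omega)

lemma conj_W2 (S : Set ℕ) (c : ℕ) : Conjugate (W2 S c) (Zsh S (c + 1)) := by
  classical
  set π : ℕ → ℕ := fun b => if b = 3 then 0 else b with hπ
  have hπ0 : ∀ b, π b = 0 ↔ (b = 0 ∨ b = 3) := by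
    intro b
    simp only [hπ]
    split <;> simp_all
  have hπ1 : ∀ b, π b = 1 ↔ b = 1 := by
    intro b
    simp only [hπ]
    split <;> simp_all
  have hπ2 : ∀ b, π b = 2 ↔ b = 2 := by
    intro b
    simp only [hπ]
    split <;> simp_all
  apply conjugate_oneBlock _ _ π
  · -- maps to
    intro x hx
    refine ⟨?_, ?_⟩
    · intro i
      rcases W2_symbols hx i with h | h | h | h <;> simp [hπ, h]
    · rintro w (((⟨k, e, he, hk, hkb, rfl⟩ | ⟨k, e, he, hk, rfl⟩) | hw) | ⟨hfin, rfl⟩) ⟨m, hm⟩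
      · -- unmarked gap word
        rw [matchesAt_gw] at hm
        obtain ⟨h1, h2, h3⟩ := hm
        have hxm : x m = 1 := (hπ1 _).mp h1
        have hz : ∀ j : ℕ, j < k → x (m + 1 + j) = 0 := by
          intro j hj
          rcases (hπ0 _).mp (h2 j hj) with h | h
          · exact h
          · exfalso
            have hpre : x (m + 1 + j - 1) = 2 := by
              apply W2_pre3 hx
              rw [show m + 1 + (j : ℤ) - 1 + 1 = m + 1 + j by ring]
              exact h
            cases j with
            | zero =>
              rw [show m + 1 + ((0 : ℕ) : ℤ) - 1 = m by push_cast; ring, hxm] at hpre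
              norm_num at hpre
            | succ j' =>
              rw [show m + 1 + ((j' + 1 : ℕ) : ℤ) - 1 = m + 1 + j' by push_cast; ring] at hpre
              rcases (hπ0 _).mp (h2 j' (by omega)) with h4 | h4 <;>
                rw [hpre] at h4 <;> norm_num at h4
        have hend : x (m + 1 + k) = 1 ∨ x (m + 1 + k) = 2 := by
          rcases he with rfl | rfl
          · exact Or.inl ((hπ1 _).mp h3)
          · exact Or.inr ((hπ2 _).mp h3)
        exact hk (W2_gap1 hx hxm hz hend)
      · -- marked gap word, too short
        rw [matchesAt_gw] at hm
        obtain ⟨h1, h2, h3⟩ := hm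
        have hxm : x m = 2 := (hπ2 _).mp h1
        have hx3 : x (m + 1) = 3 := W2_after2 hx hxm
        have hend : x (m + 1 + k) = 1 ∨ x (m + 1 + k) = 2 := by
          rcases he with rfl | rfl
          · exact Or.inl ((hπ1 _).mp h3)
          · exact Or.inr ((hπ2 _).mp h3)
        cases k with
        | zero =>
          rw [show m + 1 + ((0 : ℕ) : ℤ) = m + 1 by push_cast; ring, hx3] at hend
          rcases hend with h | h <;> norm_num at h
        | succ k' =>
          have hz : ∀ j : ℕ, j < k' → x (m + 2 + j) = 0 := by
            intro j hj
            have h4 := h2 (j + 1) (by omega)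
            rw [show m + 1 + ((j + 1 : ℕ) : ℤ) = m + 2 + j by push_cast; ring] at h4
            rcases (hπ0 _).mp h4 with h5 | h5
            · exact h5
            · exfalso
              have hpre : x (m + 2 + j - 1) = 2 := by
                apply W2_pre3 hx
                rw [show m + 2 + (j : ℤ) - 1 + 1 = m + 2 + j by ring]
                exact h5
              cases j with
              | zero =>
                rw [show m + 2 + ((0 : ℕ) : ℤ) - 1 = m + 1 by push_cast; ring, hx3] at hpre
                norm_num at hpre
              | succ j' =>
                have h6 := h2 (j' + 1) (by omega)
                rw [show m + 1 + ((j' + 1 : ℕ) : ℤ) = m + 2 + j' by push_cast; ring] at h6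
                rw [show m + 2 + ((j' + 1 : ℕ) : ℤ) - 1 = m + 2 + j' by push_cast; ring] at hpre
                rcases (hπ0 _).mp h6 with h7 | h7 <;> rw [hpre] at h7 <;> norm_num at h7
          exfalso
          have h8 := (W2_after23 hx hxm).1 k' (by omega)
          rw [show m + 1 + ((k' + 1 : ℕ) : ℤ) = m + 2 + k' by push_cast; ring] at hend
          rcases hend with h | h <;> rw [h8] at h <;> norm_num at h
      · -- marked gap word, too long
        rw [Set.mem_singleton_iff] at hw
        subst hw
        rw [matchesAt_cons_rep] at hm
        obtain ⟨h1, h2⟩ := hm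
        have hxm : x m = 2 := (hπ2 _).mp h1
        have hx3 : x (m + 1) = 3 := W2_after2 hx hxm
        have hz : ∀ j : ℕ, j < c + 1 → x (m + 2 + j) = 0 := by
          intro j hj
          have h4 := h2 (j + 1) (by omega)
          rw [show m + 1 + ((j + 1 : ℕ) : ℤ) = m + 2 + j by push_cast; ring] at h4
          rcases (hπ0 _).mp h4 with h5 | h5
          · exact h5
          · exfalso
            have hpre : x (m + 2 + j - 1) = 2 := by
              apply W2_pre3 hx
              rw [show m + 2 + (j : ℤ) - 1 + 1 = m + 2 + j by ring]
              exact h5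
            cases j with
            | zero =>
              rw [show m + 2 + ((0 : ℕ) : ℤ) - 1 = m + 1 by push_cast; ring, hx3] at hpre
              norm_num at hpre
            | succ j' =>
              have h6 := h2 (j' + 1) (by omega)
              rw [show m + 1 + ((j' + 1 : ℕ) : ℤ) = m + 2 + j' by push_cast; ring] at h6
              rw [show m + 2 + ((j' + 1 : ℕ) : ℤ) - 1 = m + 2 + j' by push_cast; ring] at hpre
              rcases (hπ0 _).mp h6 with h7 | h7 <;> rw [hpre] at h7 <;> norm_num at h7
        have h8 := hz c (by omega)
        rcases (W2_after23 hx hxm).2 with h | h <;> rw [h8] at h <;> norm_num at h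
      · -- long runs of zeros
        rw [matchesAt_replicate0] at hm
        have hz : ∀ j : ℕ, 1 ≤ j → j < 1 + max (sSup S) (c + 1) → x (m + j) = 0 := by
          intro j h1j hj
          rcases (hπ0 _).mp (hm j hj) with h | h
          · exact h
          · exfalso
            obtain ⟨j', rfl⟩ : ∃ j' : ℕ, j = j' + 1 := ⟨j - 1, by omega⟩
            have hpre : x (m + j') = 2 := by
              apply W2_pre3 hx
              rw [show m + (j' : ℤ) + 1 = m + ((j' + 1 : ℕ) : ℤ) by push_cast; ring]
              exact h
            rcases (hπ0 _).mp (hm j' (by omega)) with h4 | h4 <;>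
              rw [hpre] at h4 <;> norm_num at h4
        have hmax1 := max_succ_le (sSup S) c
        rcases (hπ0 _).mp (by simpa using hm 0 (by omega)) with h0 | h0
        · have hrun : Run0 x m (1 + max (sSup S) (c + 1)) := by
            intro j hj
            cases j with
            | zero => simpa using h0
            | succ j' => exact hz (j' + 1) (by omega) hj
          have := W2_run hx hfin hrun
          omega
        · have hpre : x (m - 1) = 2 := (W2_3iff hx).mp h0
          have hend := (W2_after23 hx hpre).2
          have h9 : x (m + ((1 + c : ℕ) : ℤ)) = 0 := by
            apply hz (1 + c) (by omega)
            have := le_max_right (sSup S) (c + 1)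
            omega
          rw [show m - 1 + 2 + (c : ℤ) = m + ((1 + c : ℕ) : ℤ) by push_cast; ring] at hend
          rcases hend with h | h <;> rw [h9] at h <;> norm_num at h
  · -- injective
    intro x hx x' hx' h
    have hc2 : ∀ m : ℤ, π (x m) = π (x' m) := fun m => congrFun h m
    have key2 : ∀ m : ℤ, x m = 2 ↔ x' m = 2 := by
      intro m
      rw [← hπ2 (x m), ← hπ2 (x' m), hc2 m]
    have key3 : ∀ m : ℤ, x m = 3 ↔ x' m = 3 := by
      intro m
      rw [W2_3iff hx, W2_3iff hx', key2]
    funext i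
    rcases W2_symbols hx i with h1 | h1 | h1 | h1
    · rcases W2_symbols hx' i with h2 | h2 | h2 | h2
      · rw [h1, h2]
      all_goals
        exfalso
        have := hc2 i
        rw [h1, h2] at this
      · simp [hπ] at this
      · simp [hπ] at this
      · exact absurd ((key3 i).mpr h2) (by rw [h1]; norm_num)
    · have h4 : π (x' i) = 1 := by
        rw [← hc2 i, h1]
        simp [hπ]
      rw [h1, (hπ1 _).mp h4]
    · rw [h1, ((key2 i).mp h1)]
    · rw [h1, ((key3 i).mp h1)]
  · -- surjective
    intro z hz
    set x : Point := fun i => if z (i - 1) = 2 then 3 else z i with hxd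
    have hz20 : ∀ i : ℤ, z (i - 1) = 2 → z i = 0 := by
      intro i h
      have := Z_after2_run hz h 0 (by omega)
      rw [show i - 1 + 1 + ((0 : ℕ) : ℤ) = i by push_cast; ring] at this
      exact this
    have hxv3 : ∀ i, x i = 3 ↔ z (i - 1) = 2 := by
      intro i
      simp only [hxd]
      split
      · simp_all
      · rcases Z_symbols hz i with h | h | h <;> rw [h] <;> simp_all
    have hxval : ∀ i b, b ≠ 3 → x i = b → z i = b ∧ z (i - 1) ≠ 2 := by
      intro i b hb hib
      simp only [hxd] at hib
      split at hib
      · exact absurd hib.symm hb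
      · rename_i hcond
        exact ⟨hib, hcond⟩
    refine ⟨x, ⟨?_, ?_⟩, ?_⟩
    · intro i
      simp only [hxd]
      split
      · simp
      · rcases Z_symbols hz i with h | h | h <;> simp [h]
    · rintro w (hw | hw) ⟨m, hm⟩
      · rcases hw with ⟨b, hb, rfl⟩ | ⟨b, hb, hb2, rfl⟩
        · -- [2, b] with b ∈ {0,1,2}
          rw [matchesAt_cons, matchesAt_singleton] at hm
          obtain ⟨h1, h2⟩ := hm
          have hzm : z m = 2 := (hxval m 2 (by norm_num) h1).1
          have : x (m + 1) = 3 := (hxv3 (m + 1)).mpr (by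
            rw [show m + 1 - 1 = m by ring]; exact hzm)
          rw [this] at h2
          rw [← h2] at hb
          simp at hb
        · -- [b, 3] with b ≠ 2
          rw [matchesAt_cons, matchesAt_singleton] at hm
          obtain ⟨h1, h2⟩ := hm
          have hzm : z m = 2 := by
            have := (hxv3 (m + 1)).mp h2
            rw [show m + 1 - 1 = m by ring] at this
            exact this
          have : x m = 2 := by
            simp only [hxd]
            rw [if_neg]
            · exact hzm
            · intro h4
              rw [hz20 m h4] at hzm
              norm_num at hzm
          exact hb2 (by rw [← h1, this])
      · -- expanded forbidden words of `ZF S c`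
        obtain ⟨w0, hw0, rfl⟩ := hw
        rcases hw0 with (((⟨k, e, he, hk, hkb, rfl⟩ | ⟨k, e, he, hk, rfl⟩) | hw) | ⟨hfin, rfl⟩)
        · -- unmarked gap word
          rw [matchesAt_expand_gw1 he] at hm
          obtain ⟨h1, h2, h3, -⟩ := hm
          have hzm : z m = 1 := (hxval m 1 (by norm_num) h1).1
          have hzz : ∀ j : ℕ, j < k → z (m + 1 + j) = 0 :=
            fun j hj => (hxval _ 0 (by norm_num) (h2 j hj)).1
          have hze : z (m + 1 + k) = 1 ∨ z (m + 1 + k) = 2 := by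
            rcases he with rfl | rfl
            · exact Or.inl (hxval _ 1 (by norm_num) h3).1
            · exact Or.inr (hxval _ 2 (by norm_num) h3).1
          exact hk (Z_gap1 hz hzm hzz hze)
        · -- marked gap word, too short
          rw [matchesAt_expand_gw2 he] at hm
          obtain ⟨h1, -, -, h3, -⟩ := hm
          have hzm : z m = 2 := (hxval m 2 (by norm_num) h1).1
          have hze : z (m + 2 + k) = e := by
            rcases he with rfl | rfl
            · exact (hxval _ 1 (by norm_num) h3).1
            · exact (hxval _ 2 (by norm_num) h3).1
          have := Z_after2_run hz hzm (k + 1) (by omega)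
          rw [show m + 1 + ((k + 1 : ℕ) : ℤ) = m + 2 + k by push_cast; ring] at this
          rw [this] at hze
          rcases he with rfl | rfl <;> norm_num at hze
        · -- marked gap word, too long
          rw [Set.mem_singleton_iff] at hw
          subst hw
          rw [expand_tail, matchesAt_append, matchesAt_cons, matchesAt_singleton,
            matchesAt_replicate0] at hm
          have e1 : m + (([2, 3] : List ℕ).length : ℤ) = m + 2 := by simp
          rw [e1] at hm
          obtain ⟨⟨h1, -⟩, h2⟩ := hm
          have hzm : z m = 2 := (hxval m 2 (by norm_num) h1).1
          have hze := Z_after2_end hz hzm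
          have h4 : z (m + 2 + c) = 0 := (hxval _ 0 (by norm_num) (h2 c (by omega))).1
          rw [show m + 1 + ((c + 1 : ℕ) : ℤ) = m + 2 + c by push_cast; ring] at hze
          rcases hze with h | h <;> rw [h4] at h <;> norm_num at h
        · -- long run of zeros
          rw [expandWord_replicate 2 3 0 (by norm_num), matchesAt_replicate0] at hm
          set N : ℕ := 1 + max (sSup S) c with hN
          have hzz : ∀ j : ℕ, j < N → z (m + j) = 0 ∧ z (m + j - 1) ≠ 2 :=
            fun j hj => hxval _ 0 (by norm_num) (hm j hj)
          have hzm1 : z (m - 1) ≠ 2 := by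
            have := (hzz 0 (by omega)).2
            rw [show m + ((0 : ℕ) : ℤ) - 1 = m - 1 by push_cast; ring] at this
            exact this
          have hmax1 := max_succ_le (sSup S) c
          have hsupN : sSup S < N := by
            have := le_max_left (sSup S) c
            omega
          rcases Z_symbols hz (m - 1) with h0 | h0 | h0
          · -- long run extends to the left
            have hrun : Run0 z (m - 1) (N + 1) := by
              intro j hj
              cases j with
              | zero => simpa using h0
              | succ j' =>
                rw [show m - 1 + ((j' + 1 : ℕ) : ℤ) = m + j' by push_cast; ring]
                exact (hzz j' (by omega)).1
            have := Z_run hz hfin hrun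
            omega
          · -- the run follows a one
            rcases Z_symbols hz (m + N) with h4 | h4 | h4
            · have hrun : Run0 z m (N + 1) := by
                intro j hj
                rcases Nat.lt_or_ge j N with h5 | h5
                · exact (hzz j h5).1
                · have : j = N := by omega
                  subst this
                  exact h4
              have := Z_run hz hfin hrun
              omega
            all_goals
              have hNS : N ∈ S := by
                refine Z_gap1 hz h0 ?_ ?_
                · intro j hj
                  rw [show m - 1 + 1 + (j : ℤ) = m + j by ring]
                  exact (hzz j hj).1
                · rw [show m - 1 + 1 + (N : ℤ) = m + N by ring]
                  tauto
              have := le_csSup hfin.bddAbove hNS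
              omega
          · exact hzm1 h0
    · funext i
      simp only [hxd, hπ]
      split
      · rename_i hcond
        rw [if_pos rfl]
        exact (hz20 i hcond).symm
      · rcases Z_symbols hz i with h | h | h <;> rw [h] <;> norm_num
lemma two_mem_alphabet_Zsh (S : Set ℕ) (c : ℕ) : 2 ∈ alphabet (Zsh S c) := by
  refine ⟨_, periodic_mem_Zsh S c, 0, ?_⟩
  rw [if_pos (dvd_zero _)]

lemma three_not_mem_alphabet_Zsh (S : Set ℕ) (c : ℕ) : 3 ∉ alphabet (Zsh S c) := by
  intro h
  have := alphabet_XF h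
  simp at this

lemma zstep (S : Set ℕ) (c : ℕ) : FlowEquiv (Zsh S c) (Zsh S (c + 1)) := by
  have hstepA : FEStep (Zsh S c) (W2 S c) := by
    refine ⟨shiftspace_Zsh S c, shiftspace_W2 S c, Or.inr (Or.inr (Or.inl ?_))⟩
    exact ⟨2, 3, two_mem_alphabet_Zsh S c, three_not_mem_alphabet_Zsh S c, (W2_eq S c).symm⟩
  have hstepB : FEStep (W2 S c) (Zsh S (c + 1)) :=
    ⟨shiftspace_W2 S c, shiftspace_Zsh S (c + 1), Or.inl (conj_W2 S c)⟩
  exact flowEquiv_trans (flowEquiv_single hstepA) (flowEquiv_single hstepB)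

lemma zchain (S : Set ℕ) (c n : ℕ) : FlowEquiv (Zsh S c) (Zsh S (c + n)) := by
  induction n with
  | zero => exact Relation.ReflTransGen.refl
  | succ n ih =>
    have := zstep S (c + n)
    exact flowEquiv_trans ih (by rwa [show c + (n + 1) = (c + n) + 1 by omega])

lemma conj_flowEquiv {X Y : Set Point} (h : Conjugate X Y) (hX : IsShiftSpace X)
    (hY : IsShiftSpace Y) : FlowEquiv X Y :=
  flowEquiv_single ⟨hX, hY, Or.inl h⟩

lemma part2_le {S : Set ℕ} (hS : S.Nonempty) {a b : ℕ} (hab : a ≤ b) (ha : a ∉ S)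
    (hb : b ∉ S) :
    FlowEquiv (sGapShift (insert a S)) (sGapShift (insert b S)) := by
  obtain ⟨n, rfl⟩ : ∃ n : ℕ, b = a + n := ⟨b - a, by omega⟩
  have h1 : FlowEquiv (sGapShift (insert a S)) (Zsh S a) :=
    flowEquiv_symm (conj_flowEquiv (conj_Z hS ha) (shiftspace_Zsh S a) (shiftspace_sGap _))
  have h2 : FlowEquiv (Zsh S a) (Zsh S (a + n)) := zchain S a n
  have h3 : FlowEquiv (Zsh S (a + n)) (sGapShift (insert (a + n) S)) :=
    conj_flowEquiv (conj_Z hS hb) (shiftspace_Zsh S (a + n)) (shiftspace_sGap _)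
  exact flowEquiv_trans (flowEquiv_trans h1 h2) h3

lemma part2 {S : Set ℕ} (hS : S.Nonempty) {a b : ℕ} (ha : a ∉ S) (hb : b ∉ S) :
    FlowEquiv (sGapShift ({a} ∪ S)) (sGapShift ({b} ∪ S)) := by
  rw [Set.singleton_union, Set.singleton_union]
  rcases le_total a b with h | h
  · exact part2_le hS h ha hb
  · exact flowEquiv_symm (part2_le hS h hb ha)

/-- (1) For every `k ≥ 1`, `X(k + S) ~FE X(S)`.
(2) For all `a, b ∈ ℕ₀ \ S`, `X({a} ∪ S) ~FE X({b} ∪ S)`. -/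
theorem stmt14 (S : Set ℕ) (hS : S.Nonempty) :
    (∀ k : ℕ, 1 ≤ k →
      FlowEquiv (sGapShift { n : ℕ | ∃ s ∈ S, n = k + s }) (sGapShift S)) ∧
    (∀ a b : ℕ, a ∉ S → b ∉ S →
      FlowEquiv (sGapShift ({a} ∪ S)) (sGapShift ({b} ∪ S))) := by
  exact ⟨fun k _ => part1 hS k, fun a b ha hb => part2 hS ha hb⟩

end SymbDyn
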